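/- arXiv:1406.2560 — 6 statements merged into one kernel-verified Lean document; each statement's English description precedes it below -/
import Mathlib

section
/- For every n ∈ ℕ and every real L with 1/2 < L ≤ 1 there exists a nonzero polynomial P(x) = Σ_{j=0}^n a_j x^j with complex coefficients satisfying |a_0| ≥ L·Σ_{j=1}^n |a_j|, such that (x−1)^k divides P(x) for some integer k ≥ (1/5)·√(n(1−L)) − 1. -/
/-!
Fix `M` and `K`, put nodes at `t₀ = 1` and `tₐ = a² M` (`1 ≤ a ≤ K`), and let `cₐ` be the
Lagrange weights with `∑ cₐ f(tₐ) = f(0)` whenever `deg f ≤ K`. Then `P = 1 - ∑ cₐ xᵗᵃ`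
satisfies `∑ⱼ pⱼ f(j) = f(0) - ∑ cₐ f(tₐ) = 0` for `f = binom(·, i)`, `i ≤ K`; these sums are
the Taylor coefficients of `P` at `1`, so `(x - 1)^(K+1) ∣ P`.

For `a ≥ 1` the weight is `cₐ = (1 - a² M)⁻¹ ∏_{1 ≤ j ≤ K, j ≠ a} j² / (j² - a²)`, and the
product has absolute value `2 C(K, a) / C(K + a, a) ≤ 2`, so `|cₐ| ≤ 2 / ((M - 1) a²)`.
Since `∑ cₐ = 1` this bounds `c₀` too, and `∑ |cₐ| ≤ 1 + 8 / (M - 1)`. Taking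
`M ≈ 9 / (1 - L)` and `K = ⌊√(n / M)⌋` gives the theorem.
-/

open Polynomial Finset

namespace Polynomial

variable {R ι : Type*}

theorem X_sub_one_pow_dvd_one_sub_sum_C_mul_X_pow [CommRing R] (s : Finset ι) (c : ι → R)
    (t : ι → ℕ) (k : ℕ)
    (hmom : ∀ i < k, ∑ a ∈ s, c a * (t a).choose i = ((0 : ℕ).choose i : R)) :
    (X - 1) ^ k ∣ 1 - ∑ a ∈ s, C (c a) * X ^ t a := by
  rw [← C_1, X_sub_C_pow_dvd_iff, X_pow_dvd_iff]
  intro i hi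
  simp only [sub_comp, Polynomial.sum_comp, one_comp, mul_comp, C_comp, X_pow_comp, C_1, coeff_sub,
    finsetSum_coeff, coeff_one, coeff_C_mul, coeff_X_add_one_pow, hmom i hi]
  rcases i with _ | i <;> simp

theorem natDegree_one_sub_sum_C_mul_X_pow_le [Ring R] {s : Finset ι} (c : ι → R)
    {t : ι → ℕ} {n : ℕ} (ht : ∀ a ∈ s, t a ≤ n) :
    (1 - ∑ a ∈ s, C (c a) * X ^ t a).natDegree ≤ n := by
  refine (natDegree_sub_le _ _).trans (max_le (by simp) ?_)
  exact natDegree_sum_le_of_forall_le _ _ fun a ha ↦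
    (natDegree_C_mul_X_pow_le _ _).trans (ht a ha)

theorem coeff_zero_one_sub_sum_C_mul_X_pow [Ring R] {s : Finset ι} (c : ι → R) {t : ι → ℕ}
    (ht : ∀ a ∈ s, t a ≠ 0) :
    (1 - ∑ a ∈ s, C (c a) * X ^ t a).coeff 0 = 1 := by
  simp only [coeff_sub, coeff_one_zero, finsetSum_coeff, coeff_C_mul_X_pow]
  rw [sum_eq_zero fun a ha ↦ if_neg (ht a ha).symm, sub_zero]

theorem sum_norm_coeff_one_sub_sum_C_mul_X_pow_le [NormedRing R] (s : Finset ι) (c : ι → R)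
    (t : ι → ℕ) {T : Finset ℕ} (hT : 0 ∉ T) :
    ∑ j ∈ T, ‖(1 - ∑ a ∈ s, C (c a) * X ^ t a).coeff j‖ ≤ ∑ a ∈ s, ‖c a‖ :=
  calc ∑ j ∈ T, ‖(1 - ∑ a ∈ s, C (c a) * X ^ t a).coeff j‖
      = ∑ j ∈ T, ‖∑ a ∈ s, if j = t a then c a else 0‖ := sum_congr rfl fun j hj ↦ by
        rw [coeff_sub, coeff_one, if_neg (ne_of_mem_of_not_mem hj hT), zero_sub, norm_neg,
          finsetSum_coeff]
        simp only [coeff_C_mul_X_pow]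
    _ ≤ ∑ j ∈ T, ∑ a ∈ s, ‖if j = t a then c a else 0‖ :=
        sum_le_sum fun j _ ↦ norm_sum_le _ _
    _ = ∑ a ∈ s, ∑ j ∈ T, if j = t a then ‖c a‖ else 0 := by
        rw [sum_comm]
        exact sum_congr rfl fun a _ ↦ sum_congr rfl fun j _ ↦ by split_ifs <;> simp
    _ ≤ ∑ a ∈ s, ‖c a‖ := sum_le_sum fun a _ ↦ by
        rw [sum_ite_eq']
        split_ifs <;> simp

end Polynomial

namespace Lagrange

variable {F ι : Type*} [Field F] [DecidableEq ι]

theorem eval_basis (s : Finset ι) (v : ι → F) (a : ι) (x : F) :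
    (Lagrange.basis s v a).eval x = ∏ b ∈ s.erase a, (x - v b) / (v a - v b) := by
  simp [Lagrange.basis, Lagrange.basisDivisor, eval_prod, div_eq_inv_mul]

theorem sum_eval_mul_eval_basis {s : Finset ι} {v : ι → F} (hvs : Set.InjOn v s) {f : F[X]}
    (hf : f.degree < #s) (x : F) :
    ∑ a ∈ s, f.eval (v a) * (Lagrange.basis s v a).eval x = f.eval x := by
  conv_rhs => rw [eq_interpolate hvs hf]
  simp [interpolate_apply, eval_finsetSum]

theorem sum_eval_basis_mul_choose [CharZero F] {s : Finset ι} {t : ι → ℕ} (ht : Set.InjOn t s)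
    (m : ℕ) {i : ℕ} (hi : i < #s) :
    ∑ a ∈ s, (Lagrange.basis s (fun a ↦ (t a : F)) a).eval (m : F) * (t a).choose i
      = (m.choose i : F) := by
  have hdeg : (descPochhammer F i).degree < #s := by
    rw [degree_eq_natDegree (monic_descPochhammer F i).ne_zero, descPochhammer_natDegree]
    exact_mod_cast hi
  have h := sum_eval_mul_eval_basis (Nat.cast_injective.comp_injOn ht) hdeg (m : F)
  simp only [Function.comp_def, descPochhammer_eval_eq_descFactorial,
    Nat.descFactorial_eq_factorial_mul_choose, Nat.cast_mul] at h
  apply mul_left_cancel₀ (by exact_mod_cast i.factorial_ne_zero : (i.factorial : F) ≠ 0)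
  rw [← h, mul_sum]
  exact sum_congr rfl fun a _ ↦ by ring

end Lagrange

theorem prod_Icc_div_add (i K : ℕ) :
    ∏ j ∈ Icc 1 K, ((j : ℝ) / (i + j)) = ((i + K).choose i : ℝ)⁻¹ := by
  induction K with
  | zero => simp
  | succ K ih =>
    rw [prod_Icc_succ_top (by omega), ih]
    have h := Nat.choose_mul_succ_eq (i + K) i
    rw [show i + K + 1 - i = K + 1 by omega, ← add_assoc] at *
    have hpos : (0 : ℝ) < (i + K).choose i := by exact_mod_cast Nat.choose_pos (by omega)
    have hpos' : (0 : ℝ) < (i + K + 1).choose i := by exact_mod_cast Nat.choose_pos (by omega)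
    have h' : ((i + K).choose i : ℝ) * (i + K + 1) = (i + K + 1).choose i * (K + 1) := by
      exact_mod_cast h
    field_simp
    push_cast
    linear_combination -h'

theorem prod_erase_Icc_div_abs_sub {i K : ℕ} (hi : i ∈ Icc 1 K) :
    ∏ j ∈ (Icc 1 K).erase i, ((j : ℝ) / |(i : ℝ) - j|) = K.choose i := by
  obtain ⟨hi1, hiK⟩ := mem_Icc.mp hi
  induction K, hiK using Nat.le_induction with
  | base =>
    have hreflect : ∏ j ∈ Ico 1 i, (i - j) = ∏ j ∈ Ico 1 i, j := by
      simpa using prod_Ico_reflect (fun j ↦ j) 1 (Nat.le_succ i)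
    have habs : ∀ j ∈ Ico 1 i, |(i : ℝ) - j| = ((i - j : ℕ) : ℝ) := fun j hj ↦ by
      rw [Nat.cast_sub (mem_Ico.mp hj).2.le, abs_of_nonneg (by simpa using (mem_Ico.mp hj).2.le)]
    rw [Icc_erase_right, prod_div_distrib, prod_congr rfl habs, ← Nat.cast_prod,
      ← Nat.cast_prod, hreflect, Nat.choose_self, Nat.cast_one, div_self]
    exact_mod_cast (prod_pos fun j hj ↦ (mem_Ico.mp hj).1).ne'
  | succ K hiK ih =>
    rw [← insert_Icc_right_eq_Icc_add_one (by omega), erase_insert_of_ne (by omega),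
      prod_insert (by simp), ih (mem_Icc.mpr ⟨hi1, hiK⟩)]
    have hiK' : (i : ℝ) < K + 1 := by exact_mod_cast Nat.lt_succ_of_le hiK
    have h : (K.choose i : ℝ) * (K + 1) = (K + 1).choose i * (K + 1 - i) := by
      have hsub : ((K + 1 - i : ℕ) : ℝ) = K + 1 - i := by
        rw [Nat.cast_sub (by omega)]; push_cast; ring
      rw [← hsub]
      exact_mod_cast Nat.choose_mul_succ_eq K i
    rw [abs_sub_comm, Nat.cast_add_one, abs_of_pos (by linarith)]
    have hne : (K : ℝ) + 1 - i ≠ 0 := by linarith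
    field_simp
    linear_combination h

theorem prod_erase_Icc_sq_div_abs_sq_sub_sq_le_two {i K : ℕ} (hi : i ∈ Icc 1 K) :
    ∏ j ∈ (Icc 1 K).erase i, ((j : ℝ) ^ 2 / |(i : ℝ) ^ 2 - j ^ 2|) ≤ 2 := by
  have hi1 : (1 : ℝ) ≤ i := by exact_mod_cast (mem_Icc.mp hi).1
  have hsplit : ∀ j ∈ (Icc 1 K).erase i, (j : ℝ) ^ 2 / |(i : ℝ) ^ 2 - j ^ 2|
      = (j / |(i : ℝ) - j|) * (j / (i + j)) := fun j _ ↦ by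
    rw [show (i : ℝ) ^ 2 - j ^ 2 = (i - j) * (i + j) by ring, abs_mul,
      abs_of_pos (by positivity : (0 : ℝ) < i + j), div_mul_div_comm, sq]
  have hadd :
      ∏ j ∈ (Icc 1 K).erase i, ((j : ℝ) / (i + j)) = 2 * ((i + K).choose i : ℝ)⁻¹ := by
    rw [← prod_Icc_div_add, ← prod_erase_mul _ _ hi]
    field_simp
    ring
  have hchoose : (K.choose i : ℝ) ≤ (i + K).choose i := by
    exact_mod_cast Nat.choose_le_choose i (by omega)
  have hpos : (0 : ℝ) < (i + K).choose i := by exact_mod_cast Nat.choose_pos (by omega)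
  rw [prod_congr rfl hsplit, prod_mul_distrib, prod_erase_Icc_div_abs_sub hi, hadd]
  calc (K.choose i : ℝ) * (2 * ((i + K).choose i : ℝ)⁻¹)
      ≤ (i + K).choose i * (2 * ((i + K).choose i : ℝ)⁻¹) := by gcongr
    _ = 2 := by field_simp

def nodeExponent (M a : ℕ) : ℕ := if a = 0 then 1 else a ^ 2 * M

noncomputable def lagrangeWeight (M K a : ℕ) : ℝ :=
  (Lagrange.basis (range (K + 1)) (fun b ↦ (nodeExponent M b : ℝ)) a).eval 0

section Nodes

variable {M K : ℕ}

theorem nodeExponent_injective (hM : 2 ≤ M) : Function.Injective (nodeExponent M) := by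
  intro a b hab
  have hsq : ∀ c ≠ 0, 2 ≤ c ^ 2 * M := fun c hc ↦
    le_mul_of_one_le_of_le (Nat.one_le_pow _ _ (Nat.pos_of_ne_zero hc)) hM
  unfold nodeExponent at hab
  split_ifs at hab with ha hb hb
  · rw [ha, hb]
  · exact absurd hab.le (by have := hsq b hb; omega)
  · exact absurd hab.ge (by have := hsq a ha; omega)
  · exact Nat.pow_left_injective two_ne_zero (Nat.eq_of_mul_eq_mul_right (by omega) hab)

theorem nodeExponent_ne_zero (hM : M ≠ 0) (a : ℕ) : nodeExponent M a ≠ 0 := by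
  unfold nodeExponent
  split_ifs with ha
  · exact one_ne_zero
  · exact mul_ne_zero (pow_ne_zero _ ha) hM

theorem nodeExponent_le {n a : ℕ} (hn : 1 ≤ n) (hKn : K ^ 2 * M ≤ n) (ha : a ≤ K) :
    nodeExponent M a ≤ n := by
  unfold nodeExponent
  split_ifs
  · exact hn
  · exact le_trans (Nat.mul_le_mul_right M (Nat.pow_le_pow_left ha 2)) hKn

theorem sum_lagrangeWeight_mul_choose {i : ℕ} (hM : 2 ≤ M) (hi : i ≤ K) :
    ∑ a ∈ range (K + 1), lagrangeWeight M K a * (nodeExponent M a).choose i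
      = ((0 : ℕ).choose i : ℝ) := by
  have h := Lagrange.sum_eval_basis_mul_choose (F := ℝ) (s := range (K + 1)) (i := i)
    (nodeExponent_injective hM).injOn 0 (by rw [card_range]; omega)
  rwa [Nat.cast_zero] at h

theorem abs_lagrangeWeight_le {i : ℕ} (hM : 2 ≤ M) (hi : i ∈ Icc 1 K) :
    |lagrangeWeight M K i| ≤ 2 / ((M - 1) * i ^ 2) := by
  have hi0 : i ≠ 0 := by have := (mem_Icc.mp hi).1; omega
  have hMR : (2 : ℝ) ≤ M := by exact_mod_cast hM
  have hiR : (1 : ℝ) ≤ i := by exact_mod_cast (mem_Icc.mp hi).1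
  have hpos : 0 < (i : ℝ) ^ 2 * M - 1 := by nlinarith
  have hnode0 : (nodeExponent M 0 : ℝ) = 1 := by simp [nodeExponent]
  have hnode : ∀ b ≠ 0, (nodeExponent M b : ℝ) = b ^ 2 * M := fun b hb ↦ by
    simp [nodeExponent, hb]
  have herase : (range (K + 1)).erase i = insert 0 ((Icc 1 K).erase i) := by
    ext b; simp only [mem_erase, mem_range, mem_insert, mem_Icc]; omega
  have hfactor : ∀ j ∈ (Icc 1 K).erase i, |(0 - (nodeExponent M j : ℝ)) /
      (nodeExponent M i - nodeExponent M j)| = (j : ℝ) ^ 2 / |(i : ℝ) ^ 2 - j ^ 2| := by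
    intro j hj
    have hj0 : j ≠ 0 := by have := (mem_Icc.mp (mem_of_mem_erase hj)).1; omega
    rw [hnode i hi0, hnode j hj0, ← mul_sub_right_distrib, abs_div, abs_mul, zero_sub, abs_neg,
      abs_mul, abs_of_nonneg (by positivity : (0 : ℝ) ≤ j ^ 2),
      abs_of_pos (by positivity : (0 : ℝ) < M), mul_div_mul_right _ _ (by positivity)]
  have hzero : |(0 - (nodeExponent M 0 : ℝ)) / (nodeExponent M i - nodeExponent M 0)|
      = ((i : ℝ) ^ 2 * M - 1)⁻¹ := by
    rw [hnode i hi0, hnode0, zero_sub, abs_div, abs_neg, abs_one, abs_of_pos hpos, one_div]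
  rw [lagrangeWeight, Lagrange.eval_basis, herase, prod_insert (by simp), abs_mul, hzero, abs_prod,
    prod_congr rfl hfactor]
  calc ((i : ℝ) ^ 2 * M - 1)⁻¹ * ∏ j ∈ (Icc 1 K).erase i, (j : ℝ) ^ 2 / |(i : ℝ) ^ 2 - j ^ 2|
      ≤ ((i : ℝ) ^ 2 * M - 1)⁻¹ * 2 := by
        gcongr
        exact prod_erase_Icc_sq_div_abs_sq_sub_sq_le_two hi
    _ ≤ 2 / ((M - 1) * i ^ 2) := by
        rw [inv_mul_eq_div]
        refine div_le_div_of_nonneg_left zero_le_two (mul_pos (by linarith) (by positivity)) ?_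
        linarith [one_le_pow₀ (n := 2) hiR]

theorem sum_abs_lagrangeWeight_le (hM : 2 ≤ M) :
    ∑ a ∈ range (K + 1), |lagrangeWeight M K a| ≤ 1 + 8 / (M - 1) := by
  have hM1 : (0 : ℝ) < M - 1 := by
    have : (2 : ℝ) ≤ M := by exact_mod_cast hM
    linarith
  have hrange : range (K + 1) = insert 0 (Icc 1 K) := by
    ext b; simp only [mem_range, mem_insert, mem_Icc]; omega
  have htotal : lagrangeWeight M K 0 + ∑ i ∈ Icc 1 K, lagrangeWeight M K i = 1 := by
    have h := sum_lagrangeWeight_mul_choose (K := K) hM (Nat.zero_le K)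
    simp only [Nat.choose_zero_right, Nat.cast_one, mul_one] at h
    rwa [hrange, sum_insert (by simp)] at h
  have htail : ∑ i ∈ Icc 1 K, |lagrangeWeight M K i| ≤ 4 / (M - 1) :=
    calc ∑ i ∈ Icc 1 K, |lagrangeWeight M K i|
          ≤ ∑ i ∈ Icc 1 K, (2 : ℝ) / ((M - 1) * i ^ 2) :=
          sum_le_sum fun i hi ↦ abs_lagrangeWeight_le hM hi
      _ = 2 / (M - 1) * ∑ i ∈ Ioo 0 (K + 1), ((i : ℝ) ^ 2)⁻¹ := by
          rw [mul_sum, show Ioo 0 (K + 1) = Icc 1 K by ext; simp; omega]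
          exact sum_congr rfl fun i _ ↦ by field_simp
      _ ≤ 2 / (M - 1) * 2 := by gcongr; simpa using sum_Ioo_inv_sq_le (α := ℝ) 0 (K + 1)
      _ = 4 / (M - 1) := by ring
  have hhead : |lagrangeWeight M K 0| ≤ 1 + ∑ i ∈ Icc 1 K, |lagrangeWeight M K i| := by
    rw [show lagrangeWeight M K 0 = 1 - ∑ i ∈ Icc 1 K, lagrangeWeight M K i by linarith]
    exact (abs_sub _ _).trans (by rw [abs_one]; gcongr; exact abs_sum_le_sum_abs _ _)
  rw [hrange, sum_insert (by simp)]
  linarith [show (8 : ℝ) / (M - 1) = 2 * (4 / (M - 1)) by ring]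

theorem exists_poly_sum_norm_coeff_le_X_sub_one_pow_dvd {n : ℕ} (hM : 2 ≤ M) (hn : 1 ≤ n)
    (hKn : K ^ 2 * M ≤ n) :
    ∃ P : ℂ[X], P.natDegree ≤ n ∧ P.coeff 0 = 1 ∧
      ∑ j ∈ Icc 1 n, ‖P.coeff j‖ ≤ 1 + 8 / (M - 1) ∧ (X - 1) ^ (K + 1) ∣ P := by
  refine ⟨1 - ∑ a ∈ range (K + 1), C (lagrangeWeight M K a : ℂ) * X ^ nodeExponent M a,
    ?_, ?_, ?_, ?_⟩
  · exact natDegree_one_sub_sum_C_mul_X_pow_le _ fun a ha ↦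
      nodeExponent_le hn hKn (Nat.lt_succ_iff.mp (mem_range.mp ha))
  · exact coeff_zero_one_sub_sum_C_mul_X_pow _ fun a _ ↦ nodeExponent_ne_zero (by omega) a
  · calc _ ≤ ∑ a ∈ range (K + 1), ‖(lagrangeWeight M K a : ℂ)‖ :=
          sum_norm_coeff_one_sub_sum_C_mul_X_pow_le _ _ _ (by simp)
      _ ≤ 1 + 8 / (M - 1) := by
          simpa only [Complex.norm_real, Real.norm_eq_abs] using sum_abs_lagrangeWeight_le hM
  · refine X_sub_one_pow_dvd_one_sub_sum_C_mul_X_pow _ _ _ _ fun i hi ↦ ?_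
    exact_mod_cast sum_lagrangeWeight_mul_choose hM (Nat.lt_succ_iff.mp hi)

end Nodes

theorem exists_nat_eight_div_sub_one_le_and_mul_le_ten {ε : ℝ} (hε0 : 0 < ε)
    (hε1 : ε ≤ 1) :
    ∃ M : ℕ, 2 ≤ M ∧ 8 / ((M : ℝ) - 1) ≤ ε ∧ ε * M ≤ 10 := by
  have hM : 9 / ε ≤ ⌈9 / ε⌉₊ := Nat.le_ceil _
  have hM' : (⌈9 / ε⌉₊ : ℝ) < 9 / ε + 1 := Nat.ceil_lt_add_one (by positivity)
  have h9 : (9 : ℝ) ≤ 9 / ε := by rw [le_div_iff₀ hε0]; linarith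
  refine ⟨⌈9 / ε⌉₊, ?_, ?_, ?_⟩
  · exact_mod_cast (by linarith : (2 : ℝ) ≤ ⌈9 / ε⌉₊)
  · have h1 : 1 ≤ 1 / ε := by rw [le_div_iff₀ hε0]; linarith
    rw [div_le_iff₀ (by linarith), ← div_le_iff₀' hε0]
    linarith [show 9 / ε = 8 / ε + 1 / ε by ring]
  · have := mul_lt_mul_of_pos_left hM' hε0
    rw [mul_add, mul_div_cancel₀ _ hε0.ne'] at this
    linarith

theorem sqrt_mul_lt_five_mul_sqrt_div_add_one {ε : ℝ} (hε : 0 ≤ ε) {M : ℕ} (hM : 0 < M)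
    (hεM : ε * M ≤ 10) (n : ℕ) :
    √(n * ε) < 5 * ((n / M).sqrt + 1 : ℕ) := by
  have hn : (n : ℝ) < M * ((n / M).sqrt + 1) ^ 2 := by
    exact_mod_cast (Nat.lt_mul_div_succ n hM).trans_le (Nat.mul_le_mul_left M (Nat.lt_succ_sqrt' _))
  rw [Real.sqrt_lt' (by positivity)]
  push_cast
  calc (n : ℝ) * ε ≤ ε * M * ((n / M).sqrt + 1) ^ 2 := by nlinarith
    _ ≤ 10 * ((n / M).sqrt + 1) ^ 2 := by gcongr
    _ < (5 * ((n / M).sqrt + 1)) ^ 2 := by nlinarith [sq_nonneg ((n / M).sqrt + 1 : ℝ)]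

theorem stmt4_general (n : ℕ) (L : ℝ) (hL0 : 1/2 < L) :
    ∃ P : Polynomial ℂ, P ≠ 0 ∧ P.natDegree ≤ n ∧
      ‖P.coeff 0‖ ≥ L * ∑ j ∈ Finset.Icc 1 n, ‖P.coeff j‖ ∧
      ∃ k : ℕ, (k : ℝ) ≥ (1/5) * Real.sqrt (n * (1 - L)) - 1 ∧ (X - 1) ^ k ∣ P := by
  by_cases hsmall : √(n * (1 - L)) ≤ 5
  · refine ⟨1, one_ne_zero, by simp, ?_, 0, by push_cast; linarith, one_dvd _⟩
    rw [sum_eq_zero fun j hj ↦ by simp [coeff_one, Nat.one_le_iff_ne_zero.mp (mem_Icc.mp hj).1]]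
    simp
  have hpos : 0 < (n : ℝ) * (1 - L) := Real.sqrt_pos.mp (by linarith)
  have hL1 : 0 < 1 - L := pos_of_mul_pos_right hpos n.cast_nonneg
  have hn : 1 ≤ n := by exact_mod_cast pos_of_mul_pos_left hpos hL1.le
  obtain ⟨M, hM, hM8, hM10⟩ := exists_nat_eight_div_sub_one_le_and_mul_le_ten hL1 (by linarith)
  obtain ⟨P, hdeg, hcoeff0, hsum, hdvd⟩ :=
    exists_poly_sum_norm_coeff_le_X_sub_one_pow_dvd hM hn
      ((Nat.mul_le_mul_right M (Nat.sqrt_le' (n / M))).trans (Nat.div_mul_le_self n M))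
  refine ⟨P, fun h ↦ by simp [h] at hcoeff0, hdeg, ?_, (n / M).sqrt + 1, ?_, hdvd⟩
  · rw [hcoeff0, norm_one, ge_iff_le]
    calc L * ∑ j ∈ Icc 1 n, ‖P.coeff j‖ ≤ L * (1 + (1 - L)) := by gcongr; linarith
      _ ≤ 1 := by nlinarith
  · linarith [sqrt_mul_lt_five_mul_sqrt_div_add_one hL1.le (by omega) hM10 n]

theorem stmt4 (n : ℕ) (L : ℝ) (hL0 : 1/2 < L) (hL : L ≤ 1) :
    ∃ P : Polynomial ℂ, P ≠ 0 ∧ P.natDegree ≤ n ∧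
      ‖P.coeff 0‖ ≥ L * ∑ j ∈ Finset.Icc 1 n, ‖P.coeff j‖ ∧
      ∃ k : ℕ, (k : ℝ) ≥ (1/5) * Real.sqrt (n * (1 - L)) - 1 ∧ (X - 1) ^ k ∣ P :=
  stmt4_general n L hL0
end

section
/- For every n ∈ ℕ, every real L with 1/2 < L ≤ 1, every nonzero polynomial P(x) = Σ_{j=0}^n a_j x^j with complex coefficients satisfying |a_0| ≥ L·Σ_{j=1}^n |a_j|, and every nonnegative integer k such that (x−1)^k divides P(x), one has k ≤ √(n(1−L)) + 1. -/
/-!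
If `(X - 1)ᵏ ∣ P = ∑ aⱼ Xʲ`, then applying the Euler operator `θ = X · d/dX` `i < k` times and
evaluating at `1` gives `∑ aⱼ jⁱ = 0`, hence `∑ aⱼ Q(j) = 0` for every `Q` of degree `< k`.
Take for `Q` the Chebyshev polynomial `T_{k-1}` composed with the affine map sending `[1, n]`
onto `[-1, 1]`: then `|Q(j)| ≤ 1` for `1 ≤ j ≤ n`, while `Q(0) ≥ 1 + 2(k-1)²/(n-1)`. So
`|a₀| (1 + 2(k-1)²/(n-1)) ≤ ∑_{j ≥ 1} |aⱼ| ≤ |a₀| / L`, which is impossible once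
`(k-1)² > n(1-L)`.
-/

open Polynomial

namespace Polynomial

section EulerOperator

variable {R : Type*} [CommRing R]

noncomputable def eulerOp (p : R[X]) : R[X] := X * derivative p

theorem coeff_eulerOp (p : R[X]) (j : ℕ) : (eulerOp p).coeff j = j * p.coeff j := by
  cases j with
  | zero => simp [eulerOp]
  | succ j => rw [eulerOp, coeff_X_mul, coeff_derivative]; push_cast; ring

theorem coeff_eulerOp_iterate (i : ℕ) (p : R[X]) (j : ℕ) :
    (eulerOp^[i] p).coeff j = (j : R) ^ i * p.coeff j := by
  induction i generalizing p with
  | zero => simp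
  | succ i ih => rw [Function.iterate_succ_apply, ih, coeff_eulerOp]; ring

theorem pow_sub_dvd_eulerOp_iterate {p q : R[X]} {n : ℕ} (m : ℕ) (dvd : q ^ n ∣ p) :
    q ^ (n - m) ∣ eulerOp^[m] p := by
  induction m with
  | zero => simpa
  | succ m ih =>
    rw [Nat.sub_succ, Function.iterate_succ_apply']
    exact (pow_sub_one_dvd_derivative_of_pow_dvd ih).mul_left X

theorem sum_coeff_mul_pow_eq_zero {p : R[X]} {n k i : ℕ} (hp : p.natDegree ≤ n)
    (hk : (X - 1) ^ k ∣ p) (hi : i < k) :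
    ∑ j ∈ Finset.range (n + 1), p.coeff j * (j : R) ^ i = 0 := by
  set q := eulerOp^[i] p
  have hq : q.natDegree < n + 1 := by
    refine Nat.lt_succ_of_le (natDegree_le_iff_coeff_eq_zero.2 fun j hj => ?_)
    rw [coeff_eulerOp_iterate, coeff_eq_zero_of_natDegree_lt (hp.trans_lt hj), mul_zero]
  have hroot : q.eval 1 = 0 := by
    obtain ⟨r, hr⟩ : X - 1 ∣ q := (dvd_pow_self _ (Nat.sub_ne_zero_of_lt hi)).trans
      (pow_sub_dvd_eulerOp_iterate i hk)
    rw [hr, eval_mul, eval_sub, eval_X, eval_one, sub_self, zero_mul]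
  rw [eval_eq_sum_range' hq] at hroot
  simpa [q, coeff_eulerOp_iterate, mul_comm] using hroot

theorem sum_coeff_mul_eval_eq_zero {p q : R[X]} {n k : ℕ} (hp : p.natDegree ≤ n)
    (hk : (X - 1) ^ k ∣ p) (hq : q.natDegree < k) :
    ∑ j ∈ Finset.range (n + 1), p.coeff j * q.eval (j : R) = 0 := by
  simp_rw [eval_eq_sum_range' hq, Finset.mul_sum]
  rw [Finset.sum_comm]
  refine Finset.sum_eq_zero fun i hi => ?_
  simp_rw [mul_left_comm _ (q.coeff i), ← Finset.mul_sum]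
  rw [sum_coeff_mul_pow_eq_zero hp hk (Finset.mem_range.1 hi), mul_zero]

end EulerOperator

end Polynomial

namespace Polynomial.Chebyshev

theorem one_add_sq_mul_sub_one_le_eval_T_real (n : ℕ) {x : ℝ} (hx : 1 ≤ x) :
    1 + (n : ℝ) ^ 2 * (x - 1) ≤ (T ℝ n).eval x := by
  suffices h : ∀ n : ℕ, 1 + (n : ℝ) ^ 2 * (x - 1) ≤ (T ℝ n).eval x ∧
      (2 * n + 1) * (x - 1) ≤ (T ℝ (n + 1)).eval x - (T ℝ n).eval x from (h n).1
  intro n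
  induction n with
  | zero => simp
  | succ n ih =>
    obtain ⟨hval, hdiff⟩ := ih
    have hval' : 1 + ((n : ℝ) + 1) ^ 2 * (x - 1) ≤ (T ℝ (n + 1)).eval x := by nlinarith
    have hrec : (T ℝ (n + 2)).eval x = 2 * x * (T ℝ (n + 1)).eval x - (T ℝ n).eval x := by
      simp [T_add_two ℝ n]
    push_cast
    refine ⟨hval', ?_⟩
    rw [show (n : ℤ) + 1 + 1 = n + 2 by ring, hrec]
    nlinarith [mul_le_mul_of_nonneg_left hval' (by linarith : (0 : ℝ) ≤ 2 * (x - 1)),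
      mul_nonneg (sq_nonneg ((n : ℝ) + 1)) (sq_nonneg (x - 1))]

noncomputable def rescaledT (N : ℝ) (m : ℕ) : ℝ[X] :=
  (T ℝ m).comp (Polynomial.C (N - 1)⁻¹ * (Polynomial.C (N + 1) - 2 * X))

theorem eval_rescaledT (N : ℝ) (m : ℕ) (t : ℝ) :
    (rescaledT N m).eval t = (T ℝ m).eval ((N + 1 - 2 * t) / (N - 1)) := by
  simp [rescaledT, div_eq_inv_mul]

theorem natDegree_rescaledT_le (N : ℝ) (m : ℕ) : (rescaledT N m).natDegree ≤ m := by
  refine natDegree_comp_le.trans ?_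
  rw [natDegree_T, Int.natAbs_natCast]
  have hlin : (Polynomial.C (N - 1)⁻¹ * (Polynomial.C (N + 1) - 2 * X)).natDegree ≤ 1 := by
    compute_degree
  simpa using Nat.mul_le_mul_left m hlin

theorem abs_eval_rescaledT_le_one {N : ℝ} (hN : 1 < N) (m : ℕ) {t : ℝ} (h1 : 1 ≤ t)
    (h2 : t ≤ N) : |(rescaledT N m).eval t| ≤ 1 := by
  rw [eval_rescaledT]
  refine abs_eval_T_real_le_one m (abs_le.2 ⟨?_, ?_⟩)
  · rw [le_div_iff₀ (by linarith)]; linarith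
  · rw [div_le_one (by linarith)]; linarith

theorem one_add_le_eval_rescaledT_zero {N : ℝ} (hN : 1 < N) (m : ℕ) :
    1 + 2 * (m : ℝ) ^ 2 / (N - 1) ≤ (rescaledT N m).eval 0 := by
  have hN' : 0 < N - 1 := by linarith
  have h := one_add_sq_mul_sub_one_le_eval_T_real m
    (x := (N + 1 - 2 * 0) / (N - 1)) (by rw [le_div_iff₀ hN']; linarith)
  rw [eval_rescaledT]
  convert h using 2
  field_simp
  ring

end Polynomial.Chebyshev

theorem norm_mul_norm_le_sum_norm_of_sum_mul_eq_zero {𝕜 : Type*} [NormedDivisionRing 𝕜]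
    {a b : ℕ → 𝕜} {n : ℕ} (hsum : ∑ j ∈ Finset.range (n + 1), a j * b j = 0)
    (hb : ∀ j ∈ Finset.Icc 1 n, ‖b j‖ ≤ 1) :
    ‖a 0‖ * ‖b 0‖ ≤ ∑ j ∈ Finset.Icc 1 n, ‖a j‖ := by
  have hrange : Finset.range (n + 1) = insert 0 (Finset.Icc 1 n) := by
    ext j; simp; omega
  rw [hrange, Finset.sum_insert (by simp), add_eq_zero_iff_eq_neg] at hsum
  calc ‖a 0‖ * ‖b 0‖ = ‖∑ j ∈ Finset.Icc 1 n, a j * b j‖ := by rw [← norm_mul, hsum, norm_neg]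
    _ ≤ ∑ j ∈ Finset.Icc 1 n, ‖a j‖ * ‖b j‖ := norm_sum_le_of_le _ fun j _ => norm_mul_le _ _
    _ ≤ ∑ j ∈ Finset.Icc 1 n, ‖a j‖ :=
      Finset.sum_le_sum fun j hj => mul_le_of_le_one_right (norm_nonneg _) (hb j hj)

namespace Polynomial

theorem sum_norm_coeff_Icc_pos {R : Type*} [NormedRing R] {P : R[X]} {n : ℕ} (hP : P ≠ 0)
    (hPn : P.natDegree ≤ n) (h0 : P.coeff 0 = 0) : 0 < ∑ j ∈ Finset.Icc 1 n, ‖P.coeff j‖ := by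
  obtain ⟨j, hj⟩ : ∃ j, P.coeff j ≠ 0 := by simpa [Polynomial.ext_iff] using hP
  have hj0 : j ≠ 0 := by rintro rfl; exact hj h0
  exact Finset.sum_pos' (fun _ _ => norm_nonneg _) ⟨j, Finset.mem_Icc.2
    ⟨Nat.one_le_iff_ne_zero.2 hj0, (le_natDegree_of_ne_zero hj).trans hPn⟩, norm_pos_iff.2 hj⟩

open Polynomial.Chebyshev in
theorem norm_coeff_zero_mul_le_sum_norm_coeff {P : ℂ[X]} {n k m : ℕ} (hn : 1 < n)
    (hP : P.natDegree ≤ n) (hk : (X - 1) ^ k ∣ P) (hm : m < k) :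
    ‖P.coeff 0‖ * (1 + 2 * (m : ℝ) ^ 2 / (n - 1)) ≤ ∑ j ∈ Finset.Icc 1 n, ‖P.coeff j‖ := by
  have hN : (1 : ℝ) < n := by exact_mod_cast hn
  set Q := rescaledT n m
  have horth : ∑ j ∈ Finset.range (n + 1), P.coeff j * ((Q.eval (j : ℝ) : ℝ) : ℂ) = 0 := by
    have hQ : (Q.map (algebraMap ℝ ℂ)).natDegree < k :=
      natDegree_map_le.trans_lt ((natDegree_rescaledT_le n m).trans_lt hm)
    have h := sum_coeff_mul_eval_eq_zero hP hk hQ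
    simp only [eval_natCast_map] at h
    exact h
  have hbound := norm_mul_norm_le_sum_norm_of_sum_mul_eq_zero horth fun j hj => by
    obtain ⟨h1, h2⟩ := Finset.mem_Icc.1 hj
    rw [Complex.norm_real, Real.norm_eq_abs]
    exact abs_eval_rescaledT_le_one hN m (by exact_mod_cast h1) (by exact_mod_cast h2)
  refine le_trans (mul_le_mul_of_nonneg_left ?_ (norm_nonneg _)) hbound
  rw [Nat.cast_zero, Complex.norm_real, Real.norm_eq_abs]
  exact (one_add_le_eval_rescaledT_zero hN m).trans (le_abs_self _)

end Polynomial

theorem stmt5 (n : ℕ) (L : ℝ) (hL0 : 1/2 < L) (hL : L ≤ 1)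
    (P : Polynomial ℂ) (hP0 : P ≠ 0) (hPn : P.natDegree ≤ n)
    (hcoeff : ‖P.coeff 0‖ ≥ L * ∑ j ∈ Finset.Icc 1 n, ‖P.coeff j‖)
    (k : ℕ) (hk : (X - 1) ^ k ∣ P) :
    (k : ℝ) ≤ Real.sqrt (n * (1 - L)) + 1 := by
  by_contra! hcon
  have hsqrt := Real.sqrt_nonneg (n * (1 - L))
  have hk1 : 1 < k := by exact_mod_cast (by linarith : (1 : ℝ) < k)
  have hkn : k ≤ n := by
    have h := (natDegree_le_of_dvd hk hP0).trans hPn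
    rwa [← C_1, natDegree_pow, natDegree_X_sub_C, mul_one] at h
  have hm : (n : ℝ) * (1 - L) < ((k - 1 : ℕ) : ℝ) ^ 2 := by
    rw [Nat.cast_sub hk1.le, Nat.cast_one, ← Real.sqrt_lt' (by linarith)]
    linarith
  have hkey := norm_coeff_zero_mul_le_sum_norm_coeff (m := k - 1) (by omega) hPn hk (by omega)
  have ha0 : 0 < ‖P.coeff 0‖ := norm_pos_iff.2 fun h0 => by
    rw [h0, norm_zero] at hcoeff
    nlinarith [sum_norm_coeff_Icc_pos hP0 hPn h0]
  set t := 2 * ((k - 1 : ℕ) : ℝ) ^ 2 / (n - 1)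
  have ht : 2 * (1 - L) < t := by
    have hn1 : (1 : ℝ) < n := by exact_mod_cast hk1.trans_le hkn
    rw [lt_div_iff₀ (by linarith)]
    nlinarith
  -- `L (1 + t) > L (3 - 2L) = 1 + (2L - 1)(1 - L)`
  have hLt : 1 < L * (1 + t) := by nlinarith
  nlinarith [mul_le_mul_of_nonneg_left hkey (by linarith : 0 ≤ L)]
end

section
/- Let p, q ∈ (1,∞) satisfy 1/p + 1/q = 1, let n ∈ ℕ, L > 0, and let m be a nonnegative integer. Suppose Q is a polynomial with complex coefficients of degree at most m such that |Q(0)| > (1/L)·(Σ_{j=1}^n |Q(j)|^q)^{1/q}. Then for every nonzero polynomial P(x) = Σ_{j=0}^n a_j x^j with complex coefficients satisfying |a_0| ≥ L·(Σ_{j=1}^n |a_j|^p)^{1/p}, the polynomial (x−1)^{m+1} does not divide P(x). -/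
/-!
Pair a polynomial `P = ∑ aⱼ Xʲ` with a function `f` by `⟨P, f⟩ = ∑ aⱼ f(j)`. Multiplying `P` by
`X - 1` turns `f` into its forward difference `Δf`, so if `(X - 1)^(m+1) ∣ P` then
`⟨P, Q⟩ = ⟨R, Δ^(m+1) Q⟩ = 0` for every polynomial `Q` of degree at most `m`.
Hence `a₀ Q(0) = -∑_{j ≥ 1} aⱼ Q(j)`, and Hölder's inequality bounds `|a₀| |Q(0)|` by the product
of the `ℓ^p` norm of `(aⱼ)_{j ≥ 1}` and the `ℓ^q` norm of `(Q(j))_{j ≥ 1}`, which the two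
hypotheses make strictly smaller than `|a₀| |Q(0)|`; and `a₀ ≠ 0`, since otherwise the hypothesis
on `P` forces all its coefficients to vanish.
-/

open Polynomial Finset fwdDiff

namespace Polynomial

variable {R : Type*} [CommRing R]

theorem sum_X_sub_one_mul (f : R → R) (P : R[X]) :
    ((X - 1) * P).sum (fun j a => a * f j) = P.sum (fun j a => a * Δ_[1] f j) := by
  have hadd (g : R → R) (P₁ P₂ : R[X]) :
      (P₁ + P₂).sum (fun j a => a * g j) =
        P₁.sum (fun j a => a * g j) + P₂.sum (fun j a => a * g j) :=
    sum_add_index _ _ _ (fun _ => zero_mul _) (fun _ _ _ => add_mul _ _ _)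
  induction P using Polynomial.induction_on' with
  | add P₁ P₂ h₁ h₂ => rw [mul_add, hadd, hadd, h₁, h₂]
  | monomial k a =>
    have hmul : (X - 1 : R[X]) * monomial k a = monomial (k + 1) a + monomial k (-a) := by
      rw [sub_mul, one_mul, X_mul_monomial, monomial_neg, sub_eq_add_neg]
    rw [hmul, hadd]
    simp only [sum_monomial_index, zero_mul, fwdDiff, Nat.cast_succ]
    ring

theorem sum_X_sub_one_pow_mul (f : R → R) (k : ℕ) (P : R[X]) :
    ((X - 1) ^ k * P).sum (fun j a => a * f j) = P.sum (fun j a => a * (Δ_[1])^[k] f j) := by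
  induction k generalizing f with
  | zero => simp
  | succ k ih => rw [pow_succ', mul_assoc, sum_X_sub_one_mul, ih, Function.iterate_succ_apply]

theorem sum_mul_eval_eq_zero_of_X_sub_one_pow_dvd {P Q : R[X]} {m : ℕ} (hQ : Q.natDegree ≤ m)
    (hP : (X - 1) ^ (m + 1) ∣ P) : P.sum (fun j a => a * Q.eval (j : R)) = 0 := by
  obtain ⟨S, rfl⟩ := hP
  rw [sum_X_sub_one_pow_mul (fun x => Q.eval x),
    fwdDiff_iter_eq_zero_of_degree_lt (Nat.lt_succ_of_le hQ)]
  simp [Polynomial.sum]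

theorem eq_zero_of_coeff_zero_of_sum_norm_coeff_rpow_eq_zero {𝕜 : Type*} [NormedRing 𝕜]
    {P : 𝕜[X]} {n : ℕ} {p : ℝ} (hp : p ≠ 0) (hn : P.natDegree ≤ n) (h₀ : P.coeff 0 = 0)
    (h : (∑ j ∈ Icc 1 n, ‖P.coeff j‖ ^ p) ^ (1 / p) = 0) : P = 0 := by
  rw [Real.rpow_eq_zero (sum_nonneg fun _ _ => by positivity) (by simpa using hp),
    sum_eq_zero_iff_of_nonneg fun _ _ => by positivity] at h
  ext (_ | j)
  · exact h₀
  · by_cases hj : j + 1 ≤ n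
    · simpa [Real.rpow_eq_zero (norm_nonneg _) hp] using
        h (j + 1) (mem_Icc.2 ⟨Nat.le_add_left 1 j, hj⟩)
    · exact coeff_eq_zero_of_natDegree_lt (by omega)

end Polynomial

theorem norm_mul_norm_le_Lp_mul_Lq_of_sum_insert_eq_zero {ι 𝕜 : Type*} [DecidableEq ι]
    [NormedDivisionRing 𝕜] {s : Finset ι} {i : ι} (hi : i ∉ s) {a b : ι → 𝕜} {p q : ℝ}
    (hpq : p.HolderConjugate q) (h : ∑ j ∈ insert i s, a j * b j = 0) :
    ‖a i‖ * ‖b i‖ ≤ (∑ j ∈ s, ‖a j‖ ^ p) ^ (1 / p) * (∑ j ∈ s, ‖b j‖ ^ q) ^ (1 / q) := by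
  rw [sum_insert hi, add_eq_zero_iff_eq_neg] at h
  calc ‖a i‖ * ‖b i‖ = ‖∑ j ∈ s, a j * b j‖ := by rw [← norm_mul, h, norm_neg]
    _ ≤ ∑ j ∈ s, ‖a j‖ * ‖b j‖ := (norm_sum_le _ _).trans (sum_le_sum fun j _ => norm_mul_le _ _)
    _ ≤ _ := Real.inner_le_Lp_mul_Lq_of_nonneg s hpq (fun _ _ => norm_nonneg _)
      (fun _ _ => norm_nonneg _)

theorem mul_lt_mul_of_mul_le_of_one_div_mul_lt {a b A B L : ℝ} (hL : 0 < L) (ha : 0 < a)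
    (hB : 0 ≤ B) (hA : L * A ≤ a) (hb : 1 / L * B < b) : A * B < a * b := by
  rw [one_div, inv_mul_lt_iff₀ hL] at hb
  have hAa : A ≤ a / L := by rwa [le_div_iff₀ hL, mul_comm]
  calc A * B ≤ a / L * B := by gcongr
    _ < a / L * (L * b) := by gcongr
    _ = a * b := by field_simp

theorem stmt13_general (p q : ℝ) (hp : 1 < p) (hpq : 1/p + 1/q = 1)
    (n : ℕ) (L : ℝ) (hL : 0 < L) (m : ℕ)
    (Q : Polynomial ℂ) (hQm : Q.natDegree ≤ m)
    (hQ : ‖Q.eval 0‖ >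
      (1/L) * (∑ j ∈ Finset.Icc 1 n, ‖Q.eval (j : ℂ)‖ ^ q) ^ (1/q))
    (P : Polynomial ℂ) (hP0 : P ≠ 0) (hPn : P.natDegree ≤ n)
    (hcoeff : ‖P.coeff 0‖ ≥
      L * (∑ j ∈ Finset.Icc 1 n, ‖P.coeff j‖ ^ p) ^ (1/p)) :
    ¬ ((X - 1) ^ (m + 1) ∣ P) := by
  intro hdvd
  have hpq' : p.HolderConjugate q :=
    Real.holderConjugate_iff.mpr ⟨hp, by simpa only [one_div] using hpq⟩
  have horth : ∑ j ∈ insert 0 (Icc 1 n), P.coeff j * Q.eval (j : ℂ) = 0 := by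
    have h := sum_mul_eval_eq_zero_of_X_sub_one_pow_dvd hQm hdvd
    rwa [sum_over_range' (n := n + 1) _ (by simp) (Nat.lt_succ_of_le hPn),
      Nat.range_succ_eq_Icc_zero, ← insert_Icc_add_one_left_eq_Icc n.zero_le] at h
  have hHolder := norm_mul_norm_le_Lp_mul_Lq_of_sum_insert_eq_zero (by simp) hpq' horth
  rw [Nat.cast_zero] at hHolder
  have ha₀ : 0 < ‖P.coeff 0‖ := by
    refine norm_pos_iff.2 fun h₀ => hP0 ?_
    have hA : (∑ j ∈ Icc 1 n, ‖P.coeff j‖ ^ p) ^ (1 / p) ≤ 0 :=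
      le_of_mul_le_mul_left (by simpa [h₀] using hcoeff) hL
    exact eq_zero_of_coeff_zero_of_sum_norm_coeff_rpow_eq_zero (by positivity) hPn h₀
      (hA.antisymm (by positivity))
  exact lt_irrefl _ <| hHolder.trans_lt <|
    mul_lt_mul_of_mul_le_of_one_div_mul_lt hL ha₀ (by positivity) hcoeff hQ

theorem stmt13 (p q : ℝ) (hp : 1 < p) (hq : 1 < q) (hpq : 1/p + 1/q = 1)
    (n : ℕ) (L : ℝ) (hL : 0 < L) (m : ℕ)
    (Q : Polynomial ℂ) (hQm : Q.natDegree ≤ m)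
    (hQ : ‖Q.eval 0‖ >
      (1/L) * (∑ j ∈ Finset.Icc 1 n, ‖Q.eval (j : ℂ)‖ ^ q) ^ (1/q))
    (P : Polynomial ℂ) (hP0 : P ≠ 0) (hPn : P.natDegree ≤ n)
    (hcoeff : ‖P.coeff 0‖ ≥
      L * (∑ j ∈ Finset.Icc 1 n, ‖P.coeff j‖ ^ p) ^ (1/p)) :
    ¬ ((X - 1) ^ (m + 1) ∣ P) :=
  stmt13_general p q hp hpq n L hL m Q hQm hQ P hP0 hPn hcoeff
end

section
/- For arbitrary real numbers A > 0 and M > 025 there exists a polynomial G with real coefficients such that F = G² has degree m < √π·√A·M^{1/4} + 2, F(0) = M, and 0 ≤ F(x) ≤ min{M, x^{−2}} for all x ∈ (0, A]. -/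
/-!
With `α = π / 2n` and `b = (1 + cos α) / A`, the polynomial `q(x) = T_n(cos α - b x)` vanishes at
`0`, as `cos α` is the largest zero of `T_n`, and on `(0, A]` it evaluates `T_n` on `[-1, cos α]`,
where `|T_n| ≤ 1`. Take `G = √M q(x) / (q'(0) x)`. Writing `cos α - b x = cos θ` with
`θ ∈ [α, π]`, the bound `|cos nθ| sin α ≤ n (cos α - cos θ)` becomes `|q(x)| ≤ |q'(0)| x`, so
`G² ≤ M`, while `|q| ≤ 1` gives `G² ≤ M / (q'(0) x)² ≤ 1 / x²` once `q'(0)² ≥ M`. Since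
`|q'(0)| = n b / sin α`, the estimates `sin α ≤ α` and `cos α ≥ 1 - α² / 2` reduce this to
`4n² ≥ π A √M + π² / 4`, which `n = ⌈√(π A √M) / 2 + π / 4⌉` satisfies with
`2(n - 1) < √(π A √M) + 2`.
-/

open Polynomial Real Set
open Polynomial.Chebyshev (T)

namespace Real

theorem natCast_mul_pi_div_two_mul {n : ℕ} (hn : n ≠ 0) : n * (π / (2 * n)) = π / 2 := by
  field_simp

theorem pi_div_two_mul_natCast_le {n : ℕ} (hn : n ≠ 0) : π / (2 * n) ≤ π / 2 :=
  div_le_div_of_nonneg_left pi_pos.le two_pos (by norm_cast; omega)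

theorem sin_pi_div_two_mul_natCast_pos {n : ℕ} (hn : n ≠ 0) : 0 < sin (π / (2 * n)) :=
  sin_pos_of_pos_of_lt_pi (by positivity) (by linarith [pi_div_two_mul_natCast_le hn, pi_pos])

theorem cos_pi_div_two_mul_natCast_nonneg {n : ℕ} (hn : n ≠ 0) : 0 ≤ cos (π / (2 * n)) :=
  cos_nonneg_of_mem_Icc ⟨by linarith [pi_pos, (by positivity : 0 ≤ π / (2 * n))],
    pi_div_two_mul_natCast_le hn⟩

theorem sin_le_sin_of_le_of_le_pi_sub {α t : ℝ} (hα : 0 ≤ α) (hαt : α ≤ t) (htα : t ≤ π - α) :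
    sin α ≤ sin t := by
  have h := strictConcaveOn_sin_Icc.concaveOn.min_le_of_mem_Icc (x := α) (y := π - α)
    ⟨hα, by linarith⟩ ⟨by linarith, by linarith⟩ ⟨hαt, htα⟩
  rwa [sin_pi_sub, min_self] at h

theorem sub_mul_sin_le_cos_sub_cos {α θ : ℝ} (hα : 0 ≤ α) (hαθ : α ≤ θ) (hθα : θ ≤ π - α) :
    (θ - α) * sin α ≤ cos α - cos θ :=
  calc (θ - α) * sin α = ∫ _ in α..θ, sin α := by simp
    _ ≤ ∫ t in α..θ, sin t :=
      intervalIntegral.integral_mono_on hαθ intervalIntegrable_const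
        (continuous_sin.intervalIntegrable _ _) fun t ht ↦
          sin_le_sin_of_le_of_le_pi_sub hα ht.1 (ht.2.trans hθα)
    _ = cos α - cos θ := integral_sin

theorem abs_cos_natCast_mul_mul_sin_le {n : ℕ} (hn : n ≠ 0) {θ : ℝ} (hαθ : π / (2 * n) ≤ θ)
    (hθ : θ ≤ π) : |cos (n * θ)| * sin (π / (2 * n)) ≤ n * (cos (π / (2 * n)) - cos θ) := by
  obtain rfl | hn2 : n = 1 ∨ 2 ≤ n := by omega
  · norm_num at hαθ ⊢
    rw [abs_of_nonpos (cos_nonpos_of_pi_div_two_le_of_le hαθ (by linarith))]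
  set α := π / (2 * n)
  have hn2 : (2 : ℝ) ≤ n := by exact_mod_cast hn2
  have hα0 : 0 < α := by positivity
  have hα1 : α ≤ 1 := by
    rw [div_le_one (by positivity)]
    linarith [pi_le_four]
  have hnα : n * α = π / 2 := natCast_mul_pi_div_two_mul hn
  have hsin : 0 ≤ sin α := sin_nonneg_of_nonneg_of_le_pi hα0.le (by linarith)
  rcases le_or_gt θ (π - α) with hθα | hθα
  · have hlip : |cos (n * θ)| ≤ n * (θ - α) := by
      have h := abs_cos_sub_cos_le (n * θ) (n * α)
      rwa [← mul_sub, hnα, cos_pi_div_two, sub_zero,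
        abs_of_nonneg (mul_nonneg n.cast_nonneg (sub_nonneg.2 hαθ))] at h
    calc |cos (n * θ)| * sin α ≤ n * (θ - α) * sin α := by gcongr
      _ = n * ((θ - α) * sin α) := by ring
      _ ≤ n * (cos α - cos θ) := by gcongr; exact sub_mul_sin_le_cos_sub_cos hα0.le hαθ hθα
  · -- for `θ ≥ π - α` the right-hand side is at least `2 n cos α ≥ 2`
    have hcosθ : cos θ ≤ -cos α := by
      rw [← cos_pi_sub]
      exact cos_le_cos_of_nonneg_of_le_pi (by linarith) hθ hθα.le
    have hcosα : 1 / 2 ≤ cos α := by nlinarith [one_sub_sq_div_two_le_cos (x := α)]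
    have := abs_cos_le_one (n * θ)
    nlinarith [sin_le_one α]

theorem mul_sin_le_mul_one_add_cos {s x : ℝ} (hs : 0 ≤ s) (hx : 0 < x)
    (h : π * s + π ^ 2 / 4 ≤ 4 * x ^ 2) :
    s * sin (π / (2 * x)) ≤ x * (1 + cos (π / (2 * x))) := by
  set α := π / (2 * x)
  have hxα : x * α = π / 2 := by simp only [α]; field_simp
  have hα : 0 < α := by positivity
  clear_value α
  calc s * sin α ≤ s * α := mul_le_mul_of_nonneg_left (sin_le hα.le) hs
    _ ≤ x * (2 - α ^ 2 / 2) := by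
      refine le_of_mul_le_mul_left ?_ (by positivity : 0 < 2 * x)
      linear_combination h + (2 * s + x * α + π / 2) * hxα
    _ ≤ x * (1 + cos α) := by gcongr; linarith [one_sub_sq_div_two_le_cos (x := α)]

end Real

namespace Polynomial.Chebyshev

variable {n : ℕ}

theorem abs_eval_T_real_mul_sin_le (hn : n ≠ 0) {y : ℝ} (hy₁ : -1 ≤ y)
    (hy₂ : y ≤ cos (π / (2 * n))) :
    |(T ℝ n).eval y| * sin (π / (2 * n)) ≤ n * (cos (π / (2 * n)) - y) := by
  have hα : π / (2 * n) ∈ Icc 0 π :=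
    ⟨by positivity, (pi_div_two_mul_natCast_le hn).trans (by linarith [pi_pos])⟩
  obtain ⟨θ, hθ, rfl⟩ : ∃ θ ∈ Icc (π / (2 * n)) π, cos θ = y :=
    ⟨arccos y, ⟨arccos_cos hα.1 hα.2 ▸ arccos_le_arccos hy₂, arccos_le_pi y⟩,
      cos_arccos hy₁ (hy₂.trans (cos_le_one _))⟩
  rw [T_real_cos, Int.cast_natCast]
  exact abs_cos_natCast_mul_mul_sin_le hn hθ.1 hθ.2

theorem eval_T_real_cos_pi_div_two_mul (hn : n ≠ 0) : (T ℝ n).eval (cos (π / (2 * n))) = 0 := by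
  rw [T_real_cos, Int.cast_natCast, natCast_mul_pi_div_two_mul hn, cos_pi_div_two]

theorem eval_derivative_T_real_cos_mul_sin (hn : n ≠ 0) :
    (derivative (T ℝ n)).eval (cos (π / (2 * n))) * sin (π / (2 * n)) = n := by
  rw [T_derivative_eq_U, eval_mul, eval_intCast, mul_assoc, U_real_cos]
  push_cast
  rw [sub_add_cancel, natCast_mul_pi_div_two_mul hn, sin_pi_div_two, mul_one]

end Polynomial.Chebyshev

/-- `T_n` precomposed with the affine map sending `0` to the largest zero `cos (π / 2n)` of `T_n`
and `A` to `-1`. -/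
noncomputable def rescaledT (n : ℕ) (A : ℝ) : ℝ[X] :=
  (T ℝ n).comp (C (cos (π / (2 * n))) - C ((1 + cos (π / (2 * n))) / A) * X)

section rescaledT

variable {n : ℕ} {A : ℝ}

theorem eval_rescaledT (x : ℝ) :
    (rescaledT n A).eval x =
      (T ℝ n).eval (cos (π / (2 * n)) - (1 + cos (π / (2 * n))) / A * x) := by
  simp [rescaledT, eval_comp]

theorem natDegree_rescaledT_le : (rescaledT n A).natDegree ≤ n :=
  natDegree_comp_le.trans <| (Nat.mul_le_mul (by simp [Chebyshev.natDegree_T])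
    (by compute_degree : (C _ - C _ * X : ℝ[X]).natDegree ≤ 1)).trans_eq (mul_one n)

theorem eval_zero_rescaledT (hn : n ≠ 0) : (rescaledT n A).eval 0 = 0 := by
  rw [eval_rescaledT, mul_zero, sub_zero, Chebyshev.eval_T_real_cos_pi_div_two_mul hn]

theorem abs_coeff_one_rescaledT_mul_sin (hn : n ≠ 0) (hA : 0 < A) :
    |(rescaledT n A).coeff 1| * sin (π / (2 * n)) = n * (1 + cos (π / (2 * n))) / A := by
  have hsin := sin_pi_div_two_mul_natCast_pos hn
  have hcos := cos_pi_div_two_mul_natCast_nonneg hn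
  have hcoeff :
      (rescaledT n A).coeff 1 * sin (π / (2 * n)) = -(n * (1 + cos (π / (2 * n))) / A) := by
    have h : (rescaledT n A).coeff 1 = (derivative (rescaledT n A)).eval 0 := by
      rw [← coeff_zero_eq_eval_zero, coeff_derivative]; simp
    rw [h, rescaledT, derivative_comp, eval_mul, eval_comp]
    simp only [derivative_sub, derivative_C, derivative_mul, derivative_X, eval_sub, eval_C,
      eval_mul, eval_X, eval_add, eval_zero, eval_one, mul_zero, sub_zero, zero_mul]
    linear_combination
      (-(1 + cos (π / (2 * n))) / A) * Chebyshev.eval_derivative_T_real_cos_mul_sin hn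
  rw [← abs_of_pos hsin, ← abs_mul, hcoeff, abs_neg, abs_of_nonneg (by positivity)]

theorem abs_eval_rescaledT_le (hn : n ≠ 0) (hA : 0 < A) {x : ℝ} (hx : x ∈ Ioc 0 A) :
    |(rescaledT n A).eval x| ≤ 1 ∧ |(rescaledT n A).eval x| ≤ |(rescaledT n A).coeff 1| * x := by
  have hsin := sin_pi_div_two_mul_natCast_pos hn
  have hcos := cos_pi_div_two_mul_natCast_nonneg hn
  set α := π / (2 * n)
  set b := (1 + cos α) / A
  have hbx : b * x ≤ 1 + cos α := by
    calc b * x ≤ b * A := by gcongr; exact hx.2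
      _ = 1 + cos α := div_mul_cancel₀ _ hA.ne'
  have hy₁ : -1 ≤ cos α - b * x := by linarith
  have hy₂ : cos α - b * x ≤ cos α := sub_le_self _ (by have := hx.1; positivity)
  rw [eval_rescaledT]
  refine ⟨Chebyshev.abs_eval_T_real_le_one _ (abs_le.2 ⟨hy₁, hy₂.trans (cos_le_one α)⟩), ?_⟩
  refine le_of_mul_le_mul_right ?_ hsin
  calc |(T ℝ n).eval (cos α - b * x)| * sin α ≤ n * (cos α - (cos α - b * x)) :=
        Chebyshev.abs_eval_T_real_mul_sin_le hn hy₁ hy₂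
    _ = |(rescaledT n A).coeff 1| * x * sin α := by
        rw [mul_right_comm, abs_coeff_one_rescaledT_mul_sin hn hA]; ring

theorem le_abs_coeff_one_rescaledT (hn : n ≠ 0) (hA : 0 < A) {a : ℝ} (ha : 0 ≤ a)
    (h : π * (A * a) + π ^ 2 / 4 ≤ 4 * n ^ 2) : a ≤ |(rescaledT n A).coeff 1| := by
  refine le_of_mul_le_mul_right ?_ (sin_pi_div_two_mul_natCast_pos hn)
  rw [abs_coeff_one_rescaledT_mul_sin hn hA, le_div_iff₀ hA]
  have := mul_sin_le_mul_one_add_cos (by positivity) (by positivity) h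
  linarith

end rescaledT

theorem exists_sq_eval_le_min_of_abs_eval_le {q : ℝ[X]} {A M : ℝ} (hM : 0 < M)
    (hq₀ : q.eval 0 = 0) (hMq : √M ≤ |q.coeff 1|)
    (hq : ∀ x ∈ Ioc 0 A, |q.eval x| ≤ 1 ∧ |q.eval x| ≤ |q.coeff 1| * x) :
    ∃ G : ℝ[X], (G ^ 2).natDegree ≤ 2 * (q.natDegree - 1) ∧ (G ^ 2).eval 0 = M ∧
      ∀ x ∈ Ioc 0 A, 0 ≤ (G ^ 2).eval x ∧ (G ^ 2).eval x ≤ min M (1 / x ^ 2) := by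
  set k := q.coeff 1
  have hk : 0 < |k| := (sqrt_pos.2 hM).trans_le hMq
  have hdivX (x : ℝ) : x * q.divX.eval x = q.eval x := by
    simpa [coeff_zero_eq_eval_zero, hq₀] using congrArg (eval x) (X_mul_divX_add q)
  have hdivX₀ : q.divX.eval 0 = k := by rw [← coeff_zero_eq_eval_zero, coeff_divX]
  refine ⟨C (√M / k) * q.divX, ?_, ?_, fun x hx ↦ ?_⟩
  · calc ((C (√M / k) * q.divX) ^ 2).natDegree ≤ 2 * (C (√M / k) * q.divX).natDegree :=
          natDegree_pow_le
      _ ≤ 2 * (q.natDegree - 1) := by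
          gcongr
          exact (natDegree_C_mul_le _ _).trans natDegree_divX_eq_natDegree_tsub_one.le
  · rw [eval_pow, eval_mul, eval_C, hdivX₀, div_mul_cancel₀ _ (abs_pos.1 hk), sq_sqrt hM.le]
  obtain ⟨hq₁, hqk⟩ := hq x hx
  have hMk : M ≤ k ^ 2 := by
    simpa [sq_abs, sq_sqrt hM.le] using pow_le_pow_left₀ (sqrt_nonneg M) hMq 2
  have hr : |q.divX.eval x| ≤ |k| := by
    refine le_of_mul_le_mul_left ?_ hx.1
    calc x * |q.divX.eval x| = |q.eval x| := by rw [← hdivX, abs_mul, abs_of_pos hx.1]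
      _ ≤ x * |k| := hqk.trans_eq (mul_comm _ _)
  rw [eval_pow, eval_mul, eval_C]
  refine ⟨sq_nonneg _, le_min ?_ ?_⟩
  · calc (√M / k * q.divX.eval x) ^ 2 = M / k ^ 2 * q.divX.eval x ^ 2 := by
          rw [mul_pow, div_pow, sq_sqrt hM.le]
      _ ≤ M / k ^ 2 * k ^ 2 := mul_le_mul_of_nonneg_left (sq_le_sq.2 hr) (by positivity)
      _ = M := div_mul_cancel₀ _ (pow_ne_zero 2 (abs_pos.1 hk))
  · calc (√M / k * q.divX.eval x) ^ 2 = M / k ^ 2 * q.eval x ^ 2 / x ^ 2 := by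
          have := hx.1.ne'
          rw [← hdivX, mul_pow, mul_pow, div_pow, sq_sqrt hM.le]; field_simp
      _ ≤ 1 * 1 / x ^ 2 := by
          gcongr
          · exact div_le_one_of_le₀ hMk (sq_nonneg k)
          · exact sq_le_one_iff_abs_le_one _ |>.2 hq₁
      _ = 1 / x ^ 2 := by rw [one_mul]

theorem stmt14 (A M : ℝ) (hA : 0 < A) (hM : 0 < M) :
    ∃ G : Polynomial ℝ,
      ((G ^ 2).natDegree : ℝ) < Real.sqrt Real.pi * Real.sqrt A * M ^ ((1:ℝ)/4) + 2 ∧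
      (G ^ 2).eval 0 = M ∧
      ∀ x ∈ Set.Ioc (0 : ℝ) A, 0 ≤ (G ^ 2).eval x ∧ (G ^ 2).eval x ≤ min M (1 / x ^ 2) := by
  set w := √π * √A * M ^ ((1 : ℝ) / 4)
  have hw : w ^ 2 = π * (A * √M) := by
    rw [mul_pow, mul_pow, sq_sqrt pi_pos.le, sq_sqrt hA.le, ← rpow_mul_natCast hM.le,
      sqrt_eq_rpow]
    norm_num [mul_assoc]
  set n := ⌈w / 2 + π / 4⌉₊
  have hn : n ≠ 0 := (Nat.ceil_pos.2 (by positivity)).ne'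
  have hn_ge : w / 2 + π / 4 ≤ n := Nat.le_ceil _
  have hn_lt : (n : ℝ) < w / 2 + π / 4 + 1 := Nat.ceil_lt_add_one (by positivity)
  have hn_sq : π * (A * √M) + π ^ 2 / 4 ≤ 4 * n ^ 2 := by
    nlinarith [mul_self_le_mul_self (by positivity) hn_ge, pi_pos, (by positivity : 0 ≤ w)]
  obtain ⟨G, hdeg, h₀, hbound⟩ := exists_sq_eval_le_min_of_abs_eval_le hM
    (eval_zero_rescaledT hn) (le_abs_coeff_one_rescaledT hn hA (sqrt_nonneg M) hn_sq)
    fun x hx ↦ abs_eval_rescaledT_le hn hA hx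
  refine ⟨G, ?_, h₀, hbound⟩
  calc ((G ^ 2).natDegree : ℝ) ≤ 2 * ((n - 1 : ℕ) : ℝ) := by
        exact_mod_cast hdeg.trans (by gcongr; exact natDegree_rescaledT_le)
    _ = 2 * ((n : ℝ) - 1) := by rw [Nat.cast_pred (Nat.pos_of_ne_zero hn)]
    _ < w + 2 := by linarith [pi_lt_four]
end

section
/- Let q ∈ [1,∞). For every n ∈ ℕ and every real K with 0 < K < 2 there exists a polynomial F with real coefficients of degree m ≤ √n·(40K)^{q/2} + 2 such that |F(0)| > K·(Σ_{j=1}^n |F(j)|^q)^{1/q}. -/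
/-!
Normalise `F(0) = 1`. As long as `|F(j)| ≤ 1` we have `|F(j)|^q ≤ |F(j)|`, so with `L = K^q` it
suffices to find `F` of degree `≤ 6 √(L n) + 2` with `L · ∑ |F(j)| < 1`.

Such an `F` is a product of Chebyshev bumps at the scales `a_i = c 9^i < n`, `c = 9 / (16 L)`. The
bump at scale `a` is `T_d` composed with the affine map sending `[a, n]` onto `[-1, 1]`, normalised
at `0`: it is bounded by `1` on `[0, n]`, and by `2 / (1 + 2√(a/n))^d ≤ 1/27` on `[a, n]` once
`d ≈ 2 √(n/a)`, because `T_d (cosh s) = cosh (d s)` and the image `(n + a) / (n - a)` of `0`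
exceeds `cosh (log (1 + 2√(a/n)))`. A point `j` lying above
exactly `m` scales then has `|F(j)| ≤ 27^(-m)`, and there are at most `c 9^m` such points, so
`∑ |F(j)| ≤ c ∑ 3^(-m) < 1/L`. The degrees `≈ 2 √(n/c) 3^(-i)` form a geometric series.
-/

open Polynomial Real Finset Polynomial.Chebyshev

namespace Polynomial.Chebyshev

theorem monotoneOn_eval_T_real (n : ℤ) : MonotoneOn (fun x => (T ℝ n).eval x) (Set.Ici 1) := by
  intro x hx y hy hxy
  simp only [Set.mem_Ici] at hx hy
  dsimp only
  rw [← cosh_arcosh hx, ← cosh_arcosh hy, T_real_cosh, T_real_cosh, cosh_le_cosh, abs_mul,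
    abs_mul, abs_of_nonneg (arcosh_nonneg hx), abs_of_nonneg (arcosh_nonneg hy)]
  gcongr
  exact (arcosh_le_arcosh (by linarith) (by linarith)).mpr hxy

theorem exp_mul_le_two_mul_eval_T_real_cosh (n : ℤ) (θ : ℝ) :
    exp (n * θ) ≤ 2 * (T ℝ n).eval (cosh θ) := by
  rw [T_real_cosh, cosh_eq]
  linarith [exp_pos (-(n * θ))]

theorem one_add_pow_le_two_mul_eval_T_real (d : ℕ) {u z : ℝ} (hu : 0 ≤ u)
    (hz : 1 + u ^ 2 / 2 ≤ z) : (1 + u) ^ d ≤ 2 * (T ℝ d).eval z := by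
  have hcosh : cosh (log (1 + u)) ≤ 1 + u ^ 2 / 2 := by
    rw [cosh_log (by positivity), div_le_iff₀ (by norm_num), ← sub_nonneg]
    have : (1 + u)⁻¹ ≤ 1 - u + u ^ 2 := by
      rw [inv_le_iff_one_le_mul₀ (by positivity)]
      nlinarith [pow_nonneg hu 3]
    nlinarith
  have hcosh_one : 1 ≤ cosh (log (1 + u)) := one_le_cosh _
  calc (1 + u) ^ d = exp ((d : ℤ) * log (1 + u)) := by
        rw [Int.cast_natCast, exp_nat_mul, exp_log (by positivity)]
    _ ≤ 2 * (T ℝ d).eval (cosh (log (1 + u))) := exp_mul_le_two_mul_eval_T_real_cosh _ _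
    _ ≤ 2 * (T ℝ d).eval z := by
        gcongr 2 * ?_
        exact monotoneOn_eval_T_real d hcosh_one (hcosh_one.trans (hcosh.trans hz))
          (hcosh.trans hz)

end Polynomial.Chebyshev

theorem exp_le_one_add_pow {B u : ℝ} {d : ℕ} (hu : 0 < u) (hd : B * (1 / u + 1 / 2) ≤ d) :
    exp B ≤ (1 + u) ^ d := by
  have hlog : B ≤ d * log (1 + u) :=
    calc B = B * (1 / u + 1 / 2) * (2 * u / (u + 2)) := by field_simp; ring
      _ ≤ d * log (1 + u) := by
        gcongr
        exact le_log_one_add_of_nonneg hu.le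
  calc exp B ≤ exp (d * log (1 + u)) := exp_le_exp.mpr hlog
    _ = (1 + u) ^ d := by rw [exp_nat_mul, exp_log (by positivity)]

theorem fiftyFour_le_exp_four : (54 : ℝ) ≤ exp 4 := by
  rw [show exp 4 = exp 1 ^ 4 by rw [← exp_nat_mul]; norm_num]
  calc (54 : ℝ) ≤ 2.7182818283 ^ 4 := by norm_num
    _ ≤ exp 1 ^ 4 := by gcongr; exact exp_one_gt_d9.le

/-- `T_d` composed with the affine map sending `a ↦ 1` and `N ↦ -1`, normalised to be `1` at `0`. -/
noncomputable def chebyshevBump (d : ℕ) (a N : ℝ) : ℝ[X] :=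
  C ((T ℝ d).eval ((N + a) / (N - a)))⁻¹ * (T ℝ d).comp (C (N - a)⁻¹ * (C (N + a) - 2 * X))

section ChebyshevBump

variable (d : ℕ) {a N : ℝ}

theorem eval_chebyshevBump (x : ℝ) : (chebyshevBump d a N).eval x =
    (T ℝ d).eval ((N + a - 2 * x) / (N - a)) / (T ℝ d).eval ((N + a) / (N - a)) := by
  simp [chebyshevBump, eval_comp, div_eq_inv_mul, mul_comm]

theorem natDegree_chebyshevBump_le : (chebyshevBump d a N).natDegree ≤ d := by
  refine (natDegree_C_mul_le _ _).trans (natDegree_comp_le.trans ?_)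
  have : (C (N - a)⁻¹ * (C (N + a) - 2 * X)).natDegree ≤ 1 :=
    (natDegree_C_mul_le _ _).trans ((natDegree_sub_le _ _).trans (by simp))
  simpa using Nat.mul_le_mul (natDegree_T ℝ (d : ℤ)).le this

theorem one_le_eval_T_chebyshevBump_center (ha : 0 ≤ a) (haN : a < N) :
    1 ≤ (T ℝ d).eval ((N + a) / (N - a)) :=
  one_le_eval_T_real _ (by rw [le_div_iff₀ (by linarith)]; linarith)

theorem eval_chebyshevBump_zero (ha : 0 ≤ a) (haN : a < N) :
    (chebyshevBump d a N).eval 0 = 1 := by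
  rw [eval_chebyshevBump, mul_zero, sub_zero,
    div_self (one_le_eval_T_chebyshevBump_center d ha haN |>.trans_lt' one_pos).ne']

theorem abs_eval_T_chebyshevBump_arg_le_one (haN : a < N) {x : ℝ} (hx : x ∈ Set.Icc a N) :
    |(T ℝ d).eval ((N + a - 2 * x) / (N - a))| ≤ 1 := by
  obtain ⟨hax, hxN⟩ := hx
  have hNa : 0 < N - a := by linarith
  refine abs_eval_T_real_le_one _ ?_
  rw [abs_div, abs_of_pos hNa, div_le_one hNa, abs_le]
  constructor <;> linarith

theorem abs_eval_chebyshevBump_le_one (ha : 0 ≤ a) (haN : a < N) {x : ℝ}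
    (hx : x ∈ Set.Icc 0 N) : |(chebyshevBump d a N).eval x| ≤ 1 := by
  obtain ⟨hx0, hxN⟩ := hx
  have hNa : 0 < N - a := by linarith
  have hc := one_le_eval_T_chebyshevBump_center d ha haN
  rw [eval_chebyshevBump, abs_div, abs_of_pos (hc.trans_lt' one_pos), div_le_one (by linarith)]
  rcases le_total x a with hxa | hax
  · have h1 : 1 ≤ (N + a - 2 * x) / (N - a) := by rw [le_div_iff₀ hNa]; linarith
    rw [abs_of_nonneg ((one_le_eval_T_real _ h1).trans' zero_le_one)]
    exact monotoneOn_eval_T_real d h1 (h1.trans (by gcongr; linarith)) (by gcongr; linarith)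
  · exact (abs_eval_T_chebyshevBump_arg_le_one d haN ⟨hax, hxN⟩).trans hc

theorem abs_eval_chebyshevBump_le (ha : 0 ≤ a) (haN : a < N) {u x : ℝ} (hu : 0 ≤ u)
    (huN : u ^ 2 * N ≤ 4 * a) (hx : x ∈ Set.Icc a N) :
    |(chebyshevBump d a N).eval x| ≤ 2 / (1 + u) ^ d := by
  have hcenter : 1 + u ^ 2 / 2 ≤ (N + a) / (N - a) := by
    rw [le_div_iff₀ (by linarith)]
    nlinarith [mul_nonneg (sq_nonneg u) ha]
  have hgrowth := one_add_pow_le_two_mul_eval_T_real d hu hcenter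
  have hc := one_le_eval_T_chebyshevBump_center d ha haN
  have hT := abs_eval_T_chebyshevBump_arg_le_one d haN hx
  rw [eval_chebyshevBump, abs_div, abs_of_pos (hc.trans_lt' one_pos),
    div_le_div_iff₀ (hc.trans_lt' one_pos) (by positivity)]
  nlinarith [abs_nonneg ((T ℝ d).eval ((N + a - 2 * x) / (N - a)))]

theorem abs_eval_chebyshevBump_le_one_div_27 (ha : 0 ≤ a) (haN : a < N) {u x : ℝ} (hu : 0 < u)
    (huN : u ^ 2 * N ≤ 4 * a) (hd : 4 * (1 / u + 1 / 2) ≤ d) (hx : x ∈ Set.Icc a N) :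
    |(chebyshevBump d a N).eval x| ≤ 1 / 27 := by
  have hpow : 54 ≤ (1 + u) ^ d := fiftyFour_le_exp_four.trans (exp_le_one_add_pow hu hd)
  refine (abs_eval_chebyshevBump_le d ha haN hu.le huN hx).trans ?_
  rw [div_le_div_iff₀ (by positivity) (by norm_num)]
  linarith

end ChebyshevBump

theorem abs_eval_prod_le_pow_card_filter {ι : Type*} (s : Finset ι) (H : ι → ℝ[X]) (a : ι → ℝ)
    {ε x : ℝ} (hle_one : ∀ i ∈ s, |(H i).eval x| ≤ 1)
    (hle : ∀ i ∈ s, a i ≤ x → |(H i).eval x| ≤ ε) :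
    |(∏ i ∈ s, H i).eval x| ≤ ε ^ #{i ∈ s | a i ≤ x} := by
  rw [eval_prod, abs_prod]
  calc ∏ i ∈ s, |(H i).eval x| ≤ ∏ i ∈ s, if a i ≤ x then ε else 1 :=
        prod_le_prod (fun i _ => abs_nonneg _) fun i hi => by
          split_ifs with h
          exacts [hle i hi h, hle_one i hi]
    _ = ε ^ #{i ∈ s | a i ≤ x} := by rw [prod_ite, prod_const, prod_const_one, mul_one]

section Scales

variable {c r : ℝ}

theorem le_mul_pow_card_filter_mul_pow_le (hc : 0 ≤ c) (hr : 1 ≤ r) {I : ℕ} {x : ℝ}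
    (hx : x ≤ c * r ^ I) : x ≤ c * r ^ #{i ∈ range I | c * r ^ i ≤ x} := by
  set m := #{i ∈ range I | c * r ^ i ≤ x}
  have hmI : m ≤ I := (card_filter_le _ _).trans (card_range I).le
  by_contra! hlt
  rcases hmI.lt_or_eq with hm | hm
  · have hsub : range (m + 1) ⊆ {i ∈ range I | c * r ^ i ≤ x} := fun i hi => by
      rw [mem_range] at hi
      refine mem_filter.mpr ⟨mem_range.mpr (by omega), le_trans ?_ hlt.le⟩
      gcongr
      omega
    simpa [m] using card_le_card hsub
  · rw [hm] at hlt
    linarith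

theorem sum_pow_card_filter_mul_pow_le (hc : 0 ≤ c) (hr : 1 ≤ r) {ε : ℝ} (hε : 0 ≤ ε)
    {n I : ℕ} (hn : (n : ℝ) ≤ c * r ^ I) :
    ∑ j ∈ Icc 1 n, ε ^ #{i ∈ range I | c * r ^ i ≤ j} ≤ c * ∑ t ∈ range (I + 1), (r * ε) ^ t := by
  set m : ℕ → ℕ := fun j => #{i ∈ range I | c * r ^ i ≤ j}
  have hfiber (t : ℕ) : (#{j ∈ Icc 1 n | m j = t} : ℝ) ≤ c * r ^ t := by
    have hsub : {j ∈ Icc 1 n | m j = t} ⊆ Icc 1 ⌊c * r ^ t⌋₊ := fun j hj => by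
      obtain ⟨hjI, rfl⟩ := mem_filter.mp hj
      obtain ⟨hj1, hjn⟩ := mem_Icc.mp hjI
      refine mem_Icc.mpr ⟨hj1, Nat.le_floor ?_⟩
      exact le_mul_pow_card_filter_mul_pow_le hc hr (le_trans (by exact_mod_cast hjn) hn)
    calc (#{j ∈ Icc 1 n | m j = t} : ℝ) ≤ ⌊c * r ^ t⌋₊ := by
          simpa using card_le_card hsub
      _ ≤ c * r ^ t := Nat.floor_le (by positivity)
  have himage : (Icc 1 n).image m ⊆ range (I + 1) := fun t ht => by
    obtain ⟨j, -, rfl⟩ := mem_image.mp ht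
    exact mem_range.mpr (Nat.lt_succ_of_le ((card_filter_le _ _).trans (card_range I).le))
  rw [Finset.sum_comp, mul_sum]
  refine (sum_le_sum fun t _ => ?_).trans
    (sum_le_sum_of_subset_of_nonneg himage fun t _ _ => by positivity)
  rw [nsmul_eq_mul, mul_pow, ← mul_assoc]
  gcongr
  exact hfiber t

end Scales

theorem geom_sum_one_third_le (I : ℕ) : ∑ i ∈ range I, (1 / 3 : ℝ) ^ i ≤ 3 / 2 := by
  rw [range_eq_Ico]
  exact (geom_sum_Ico_le_of_lt_one (by norm_num) (by norm_num)).trans_eq (by norm_num)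

theorem six_mul_le_three_pow_add_four (I : ℕ) : 6 * I ≤ 3 ^ I + 4 := by
  induction I with
  | zero => norm_num
  | succ k ih =>
    rcases k with _ | k
    · norm_num
    · have : 3 ≤ 3 ^ (k + 1) := Nat.le_self_pow (by omega) 3
      rw [pow_succ]
      omega

theorem exists_mul_pow_ge_minimal {c r : ℝ} (hc : 0 < c) (hr : 1 < r) (x : ℝ) :
    ∃ I : ℕ, x ≤ c * r ^ I ∧ ∀ i < I, c * r ^ i < x := by
  have hex : ∃ I : ℕ, x ≤ c * r ^ I := by
    obtain ⟨I, hI⟩ := pow_unbounded_of_one_lt (x / c) hr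
    exact ⟨I, by rw [div_lt_iff₀ hc] at hI; linarith⟩
  exact ⟨Nat.find hex, Nat.find_spec hex, fun i hi => not_le.mp (Nat.find_min hex hi)⟩

/-- With `u = 3^(i+1) / (2X)` the degree at scale `c 9^i` is `⌈4 (1/u + 1/2)⌉`, which makes
`(1 + u)^d ≥ e^4 ≥ 54`. -/
noncomputable def multiscaleBump (X c : ℝ) (n I : ℕ) : ℝ[X] :=
  ∏ i ∈ range I, chebyshevBump ⌈4 * (2 * X / 3 ^ (i + 1) + 1 / 2)⌉₊ (c * 9 ^ i) n

section MultiscaleBump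

variable {X c : ℝ} {n I : ℕ}

theorem natDegree_multiscaleBump_le (hX : 0 ≤ X) :
    ((multiscaleBump X c n I).natDegree : ℝ) ≤ 4 * X + 3 * I := by
  have hterm (i : ℕ) :
      (⌈4 * (2 * X / 3 ^ (i + 1) + 1 / 2)⌉₊ : ℝ) ≤ 8 * X / 3 * (1 / 3) ^ i + 3 := by
    have := Nat.ceil_lt_add_one (by positivity : 0 ≤ 4 * (2 * X / 3 ^ (i + 1) + 1 / 2))
    have h3 : 2 * X / 3 ^ (i + 1) = 2 * X / 3 * (1 / 3) ^ i := by
      rw [pow_succ, one_div_pow]; field_simp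
    linarith
  calc ((multiscaleBump X c n I).natDegree : ℝ)
      ≤ ∑ i ∈ range I, (⌈4 * (2 * X / 3 ^ (i + 1) + 1 / 2)⌉₊ : ℝ) := by
        rw [← Nat.cast_sum, Nat.cast_le]
        exact (natDegree_prod_le _ _).trans (sum_le_sum fun i _ => natDegree_chebyshevBump_le _)
    _ ≤ ∑ i ∈ range I, (8 * X / 3 * (1 / 3) ^ i + 3) := sum_le_sum fun i _ => hterm i
    _ = 8 * X / 3 * ∑ i ∈ range I, (1 / 3 : ℝ) ^ i + 3 * I := by
        rw [sum_add_distrib, mul_sum]; simp [mul_comm]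
    _ ≤ 8 * X / 3 * (3 / 2) + 3 * I := by
        gcongr
        exact geom_sum_one_third_le I
    _ = 4 * X + 3 * I := by ring

theorem eval_multiscaleBump_zero (hc : 0 ≤ c) (hI : ∀ i < I, c * 9 ^ i < n) :
    (multiscaleBump X c n I).eval 0 = 1 := by
  rw [multiscaleBump, eval_prod]
  exact prod_eq_one fun i hi =>
    eval_chebyshevBump_zero _ (by positivity) (hI i (mem_range.mp hi))

theorem abs_eval_multiscaleBump_le (hc : 0 ≤ c) (hX : 0 ≤ X) (hcX : 9 * n ≤ 16 * c * X ^ 2)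
    (hI : ∀ i < I, c * 9 ^ i < n) {x : ℝ} (hx : x ∈ Set.Icc 0 (n : ℝ)) :
    |(multiscaleBump X c n I).eval x| ≤ (1 / 27) ^ #{i ∈ range I | c * 9 ^ i ≤ x} := by
  refine abs_eval_prod_le_pow_card_filter _ _ _
    (fun i hi => abs_eval_chebyshevBump_le_one _ (by positivity) (hI i (mem_range.mp hi)) hx)
    fun i hi hix => ?_
  have hi := mem_range.mp hi
  have hn : (0 : ℝ) < n := (hI i hi).trans_le' (by positivity)
  have hX0 : 0 < X := hX.lt_of_ne fun h => by rw [← h] at hcX; linarith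
  refine abs_eval_chebyshevBump_le_one_div_27 _ (by positivity) (hI i hi)
    (u := 3 ^ (i + 1) / (2 * X)) (by positivity) ?_ ?_ ⟨hix, hx.2⟩
  · have h9 : ((3 : ℝ) ^ (i + 1)) ^ 2 = 9 * 9 ^ i := by
      rw [← pow_mul, mul_comm, pow_mul, pow_succ']; norm_num
    rw [div_pow, h9, mul_pow, div_mul_eq_mul_div, div_le_iff₀ (by positivity)]
    nlinarith [pow_pos (by norm_num : (0 : ℝ) < 9) i]
  · rw [one_div_div]
    exact Nat.le_ceil _

theorem sum_abs_eval_multiscaleBump_le (hc : 0 ≤ c) (hX : 0 ≤ X) (hcX : 9 * n ≤ 16 * c * X ^ 2)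
    (hnI : (n : ℝ) ≤ c * 9 ^ I) (hI : ∀ i < I, c * 9 ^ i < n) :
    ∑ j ∈ Icc 1 n, |(multiscaleBump X c n I).eval (j : ℝ)| ≤ 3 / 2 * c := by
  have hpoint (j : ℕ) (hj : j ∈ Icc 1 n) := abs_eval_multiscaleBump_le hc hX hcX hI
    (x := j) ⟨by positivity, by exact_mod_cast (mem_Icc.mp hj).2⟩
  calc ∑ j ∈ Icc 1 n, |(multiscaleBump X c n I).eval (j : ℝ)|
      ≤ c * ∑ t ∈ range (I + 1), (9 * (1 / 27) : ℝ) ^ t :=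
        (sum_le_sum hpoint).trans
          (sum_pow_card_filter_mul_pow_le hc (by norm_num) (by norm_num) hnI)
    _ ≤ c * (3 / 2) := by
        gcongr
        exact le_of_eq_of_le (by norm_num) (geom_sum_one_third_le (I + 1))
    _ = 3 / 2 * c := mul_comm _ _

end MultiscaleBump

theorem exists_eval_zero_eq_one_sum_abs_eval_lt {L : ℝ} (hL : 0 < L) (n : ℕ) :
    ∃ F : ℝ[X], F.eval 0 = 1 ∧ (∀ j ∈ Icc 1 n, |F.eval (j : ℝ)| ≤ 1) ∧
      L * ∑ j ∈ Icc 1 n, |F.eval (j : ℝ)| < 1 ∧ (F.natDegree : ℝ) ≤ 6 * √(L * n) + 2 := by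
  set X := √(L * n)
  set c : ℝ := 9 / (16 * L)
  have hX : 0 ≤ X := sqrt_nonneg _
  have hX2 : X ^ 2 = L * n := sq_sqrt (by positivity)
  have hcX : 9 * n ≤ 16 * c * X ^ 2 := le_of_eq (by rw [hX2]; simp only [c]; field_simp)
  obtain ⟨I, hnI, hI⟩ := exists_mul_pow_ge_minimal (r := 9) (by positivity : 0 < c) (by norm_num) n
  have hIX : 3 * (I : ℝ) ≤ 2 * X + 2 := by
    rcases Nat.eq_zero_or_pos I with hI0 | hI0
    · rw [hI0, Nat.cast_zero]; linarith
    · -- minimality of `I` at `I - 1` gives `3^I < 4X`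
      have h := hI (I - 1) (by omega)
      rw [div_mul_eq_mul_div, div_lt_iff₀ (by positivity)] at h
      have h3 : (3 : ℝ) ^ I < 4 * X := by
        refine lt_of_pow_lt_pow_left₀ 2 (by positivity) ?_
        calc ((3 : ℝ) ^ I) ^ 2 = 9 * 9 ^ (I - 1) := by
              rw [← pow_mul, mul_comm, pow_mul, ← pow_succ']; norm_num; omega
          _ < (4 * X) ^ 2 := by rw [mul_pow, hX2]; linarith
      have : (6 * I : ℝ) ≤ 3 ^ I + 4 := by exact_mod_cast six_mul_le_three_pow_add_four I
      linarith
  have hpoint (j : ℕ) (hj : j ∈ Icc 1 n) :=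
    abs_eval_multiscaleBump_le (by positivity) hX hcX hI (x := j)
      ⟨by positivity, by exact_mod_cast (mem_Icc.mp hj).2⟩
  refine ⟨multiscaleBump X c n I, eval_multiscaleBump_zero (by positivity) hI,
    fun j hj => (hpoint j hj).trans (pow_le_one₀ (by norm_num) (by norm_num)), ?_,
    (natDegree_multiscaleBump_le hX).trans (by linarith)⟩
  calc L * ∑ j ∈ Icc 1 n, |(multiscaleBump X c n I).eval (j : ℝ)| ≤ L * (3 / 2 * c) := by
        gcongr
        exact sum_abs_eval_multiscaleBump_le (by positivity) hX hcX hnI hI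
    _ < 1 := by simp only [c]; field_simp; norm_num

theorem mul_rpow_one_div_lt_one {K S q : ℝ} (hK : 0 ≤ K) (hS : 0 ≤ S) (hq : 0 < q)
    (h : K ^ q * S < 1) : K * S ^ (1 / q) < 1 := by
  rw [show K * S ^ (1 / q) = (K ^ q * S) ^ (1 / q) by
    rw [mul_rpow (by positivity) hS, one_div, rpow_rpow_inv hK hq.ne']]
  exact rpow_lt_one (by positivity) h (by positivity)

theorem six_mul_sqrt_rpow_mul_le {K q : ℝ} (hK : 0 ≤ K) (hq : 1 ≤ q) (n : ℝ) :
    6 * √(K ^ q * n) ≤ √n * (40 * K) ^ (q / 2) := by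
  have h6 : (6 : ℝ) ≤ 40 ^ (q / 2) :=
    calc (6 : ℝ) = 36 ^ (1 / 2 : ℝ) := by
          rw [show (36 : ℝ) = 6 ^ (2 : ℝ) by norm_num, ← rpow_mul (by norm_num)]; norm_num
      _ ≤ 40 ^ (1 / 2 : ℝ) := by gcongr; norm_num
      _ ≤ 40 ^ (q / 2) := rpow_le_rpow_of_exponent_le (by norm_num) (by linarith)
  rw [sqrt_mul (by positivity), sqrt_eq_rpow (K ^ q), ← rpow_mul hK, mul_rpow (by norm_num) hK]
  calc 6 * (K ^ (q * (1 / 2)) * √n) ≤ 40 ^ (q / 2) * (K ^ (q * (1 / 2)) * √n) := by gcongr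
    _ = √n * (40 ^ (q / 2) * K ^ (q / 2)) := by ring_nf

theorem stmt16_general (q : ℝ) (hq : 1 ≤ q) (n : ℕ) (K : ℝ) (hK0 : 0 < K) :
    ∃ F : Polynomial ℝ,
      (F.natDegree : ℝ) ≤ Real.sqrt n * (40 * K) ^ (q/2) + 2 ∧
      |F.eval 0| > K * (∑ j ∈ Finset.Icc 1 n, |F.eval (j : ℝ)| ^ q) ^ (1/q) := by
  obtain ⟨F, hF0, hF1, hsum, hdeg⟩ :=
    exists_eval_zero_eq_one_sum_abs_eval_lt (rpow_pos_of_pos hK0 q) n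
  refine ⟨F, hdeg.trans (add_le_add_left (six_mul_sqrt_rpow_mul_le hK0.le hq n) 2), ?_⟩
  have hpow_le : ∑ j ∈ Icc 1 n, |F.eval (j : ℝ)| ^ q ≤ ∑ j ∈ Icc 1 n, |F.eval (j : ℝ)| :=
    sum_le_sum fun j hj => rpow_le_self_of_le_one (abs_nonneg _) (hF1 j hj) hq
  rw [hF0, abs_one, gt_iff_lt]
  refine mul_rpow_one_div_lt_one hK0.le (sum_nonneg fun j _ => by positivity) (by linarith) ?_
  exact (mul_le_mul_of_nonneg_left hpow_le (by positivity)).trans_lt hsum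

theorem stmt16 (q : ℝ) (hq : 1 ≤ q) (n : ℕ) (K : ℝ) (hK0 : 0 < K) (hK : K < 2) :
    ∃ F : Polynomial ℝ,
      (F.natDegree : ℝ) ≤ Real.sqrt n * (40 * K) ^ (q/2) + 2 ∧
      |F.eval 0| > K * (∑ j ∈ Finset.Icc 1 n, |F.eval (j : ℝ)| ^ q) ^ (1/q) :=
  stmt16_general q hq n K hK0
end

section
/- For every integer m ≥ 2 there exist real numbers d and c_1, c_2, …, c_m with |d| ≤ 8 and |c_k| ≤ 4/|k² − 2| for k = 1, 2, …, m, such that the polynomial H_m(x) = 1 + d·x² + Σ_{k=1}^m c_k·x^{k²} (of degree at most m²) is divisible by (x−1)^{m+1}. -/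
/-!
Take as coefficients the barycentric weights `w i = ∏_{j ≠ i} (e i - e j)⁻¹` of the exponents
`e = 0, 1, 4, …, m², 2`. For every polynomial `q` of degree `≤ m`, `∑ w i * q (e i)` is the
leading coefficient of the degree-`(m + 1)` interpolant of `q`, hence `0`; applied to
`q = choose · j` this kills the first `m + 1` Taylor coefficients at `1` of `∑ w i X^(e i)`.
After normalising `w 0 = 1`, the bound on `c k` reduces to `(m!)² ≤ (m - k)! (m + k)!` and the
bound on `d` to `∏_{1 ≤ k ≤ m} k² / |k² - 2| ≤ 8`.
-/

open Polynomial Finset Nat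

theorem Polynomial.X_sub_one_pow_dvd_sum_C_mul_X_pow_iff {R ι : Type*} [CommRing R]
    (s : Finset ι) (w : ι → R) (e : ι → ℕ) (n : ℕ) :
    (X - 1) ^ n ∣ ∑ i ∈ s, C (w i) * X ^ e i ↔
      ∀ j < n, ∑ i ∈ s, w i * (e i).choose j = 0 := by
  rw [← C_1, X_sub_C_pow_dvd_iff, X_pow_dvd_iff]
  refine forall₂_congr fun j _ => ?_
  rw [← taylor_apply, taylor_coeff, map_sum, eval_finsetSum]
  refine Eq.congr_left (sum_congr rfl fun i _ => ?_)
  rw [C_mul_X_pow_eq_monomial, hasseDeriv_monomial, eval_monomial, one_pow, mul_one, mul_comm]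

theorem Lagrange.sum_eval_mul_nodalWeight_eq_zero {F ι : Type*} [Field F] [DecidableEq ι]
    {s : Finset ι} {v : ι → F} (hvs : Set.InjOn v s) {f : F[X]} (hf : f.degree < ↑(#s - 1)) :
    ∑ i ∈ s, f.eval (v i) * nodalWeight s v i = 0 := by
  have hint := eq_interpolate hvs (hf.trans_le (by exact_mod_cast Nat.sub_le #s 1))
  have hlead : (interpolate s v fun i => f.eval (v i)).coeff (#s - 1)
      = ∑ i ∈ s, f.eval (v i) * nodalWeight s v i := by
    rw [interpolate_apply, finsetSum_coeff]
    refine sum_congr rfl fun i hi => ?_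
    have hdeg : (nodal (s.erase i) v).natDegree = #s - 1 := by
      rw [natDegree_nodal, card_erase_of_mem hi]
    rw [basis_eq_prod_sub_inv_mul_nodal_div hi, ← nodal_erase_eq_nodal_div hi, coeff_C_mul,
      coeff_C_mul, ← hdeg, nodal_monic.coeff_natDegree, mul_one, mul_comm]
  rw [← hlead, ← hint, coeff_eq_zero_of_degree_lt hf]

theorem Lagrange.sum_nodalWeight_mul_choose_eq_zero {F ι : Type*} [Field F] [CharZero F]
    [DecidableEq ι] {s : Finset ι} {e : ι → ℕ} (he : Set.InjOn e s) {j : ℕ}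
    (hj : j < #s - 1) :
    ∑ i ∈ s, nodalWeight s (fun i => (e i : F)) i * (e i).choose j = 0 := by
  have hdeg : (descPochhammer F j).degree < ↑(#s - 1) := by
    rw [degree_eq_natDegree (monic_descPochhammer F j).ne_zero, descPochhammer_natDegree]
    exact_mod_cast hj
  have hsum := sum_eval_mul_nodalWeight_eq_zero
    (v := fun i => (e i : F)) (Nat.cast_injective.comp_injOn he) hdeg
  simp only [descPochhammer_eval_eq_descFactorial, descFactorial_eq_factorial_mul_choose,
    cast_mul, mul_assoc, ← mul_sum] at hsum
  simpa only [mul_comm] using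
    (mul_eq_zero.1 hsum).resolve_left (cast_ne_zero.2 j.factorial_ne_zero)

theorem Lagrange.X_sub_one_pow_dvd_sum_C_nodalWeight_mul_X_pow {F ι : Type*} [Field F]
    [CharZero F] [DecidableEq ι] {s : Finset ι} {e : ι → ℕ} (he : Set.InjOn e s) :
    (X - 1) ^ (#s - 1) ∣ ∑ i ∈ s, C (nodalWeight s (fun i => (e i : F)) i) * X ^ e i :=
  (X_sub_one_pow_dvd_sum_C_mul_X_pow_iff _ _ _ _).2 fun _ hj =>
    sum_nodalWeight_mul_choose_eq_zero he hj

theorem Lagrange.abs_nodalWeight_div_nodalWeight {F ι : Type*} [Field F] [LinearOrder F]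
    [IsStrictOrderedRing F] [DecidableEq ι] (s : Finset ι) (v : ι → F) (i i₀ : ι) :
    |nodalWeight s v i / nodalWeight s v i₀| =
      (∏ j ∈ s.erase i₀, |v i₀ - v j|) / ∏ j ∈ s.erase i, |v i - v j| := by
  simp only [nodalWeight, abs_div, abs_prod, prod_inv_distrib, inv_div_inv]

theorem Nat.factorial_sq_le_factorial_sub_mul_factorial_add {m k : ℕ} (hk : k ≤ m) :
    m ! ^ 2 ≤ (m - k)! * (m + k)! := by
  have hm : m.choose k * k ! * (m - k)! = m ! := choose_mul_factorial_mul_factorial hk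
  have hmk : (m + k).choose k * k ! * m ! = (m + k)! := by
    simpa using choose_mul_factorial_mul_factorial (le_add_left k m)
  calc m ! ^ 2 = m.choose k * k ! * (m - k)! * m ! := by rw [hm, sq]
    _ ≤ (m + k).choose k * k ! * (m - k)! * m ! := by
      gcongr ?_ * _ * _ * _; exact choose_le_choose k (le_add_right m k)
    _ = (m - k)! * (m + k)! := by rw [← hmk]; ring

theorem prod_range_erase_abs_sub (k : ℕ) {m : ℕ} (hk : k ≤ m) :
    ∏ j ∈ (range (m + 1)).erase k, |(k : ℝ) - j| = k ! * (m - k)! := by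
  have hsplit : (range (m + 1)).erase k = range k ∪ Ico (k + 1) (m + 1) := by
    ext j; simp only [mem_erase, mem_range, mem_union, mem_Ico]; omega
  have hdisj : Disjoint (range k) (Ico (k + 1) (m + 1)) := by
    rw [disjoint_left]; intro j; simp only [mem_range, mem_Ico]; omega
  have hbelow : ∏ j ∈ range k, |(k : ℝ) - j| = k ! := by
    rw [← descFactorial_self, descFactorial_eq_prod_range, cast_prod]
    refine prod_congr rfl fun j hj => ?_
    have hjk : (j : ℝ) ≤ k := by exact_mod_cast (mem_range.1 hj).le
    rw [cast_sub (mem_range.1 hj).le, abs_of_nonneg (sub_nonneg.2 hjk)]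
  have habove : ∏ j ∈ Ico (k + 1) (m + 1), |(k : ℝ) - j| = (m - k)! := by
    rw [prod_Ico_eq_prod_range, show m + 1 - (k + 1) = m - k by omega,
      ← prod_range_add_one_eq_factorial, cast_prod]
    refine prod_congr rfl fun i _ => ?_
    rw [abs_sub_comm, abs_of_nonneg (by push_cast; linarith)]
    push_cast; ring
  rw [hsplit, prod_union hdisj, hbelow, habove]

theorem two_mul_factorial_mul_prod_range_erase_add {k m : ℕ} (hk₁ : 1 ≤ k) (hk : k ≤ m) :
    2 * k ! * ∏ j ∈ (range (m + 1)).erase k, (k + j) = (m + k)! := by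
  obtain ⟨n, rfl⟩ : ∃ n, k = n + 1 := ⟨k - 1, by omega⟩
  calc 2 * (n + 1)! * ∏ j ∈ (range (m + 1)).erase (n + 1), (n + 1 + j)
      = n ! * ((n + 1 + (n + 1)) * ∏ j ∈ (range (m + 1)).erase (n + 1), (n + 1 + j)) := by
        rw [factorial_succ]; ring
    _ = n ! * (n + 1).ascFactorial (m + 1) := by
        rw [mul_prod_erase _ (fun j => n + 1 + j) (mem_range.2 (by omega)),
          ascFactorial_eq_prod_range]
    _ = (m + (n + 1))! := by rw [factorial_mul_ascFactorial]; ring_nf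

theorem prod_range_erase_abs_sq_sub_sq (k m : ℕ) :
    ∏ j ∈ (range (m + 1)).erase k, |(k : ℝ) ^ 2 - j ^ 2| =
      (∏ j ∈ (range (m + 1)).erase k, |(k : ℝ) - j|) *
        ∏ j ∈ (range (m + 1)).erase k, ((k + j : ℕ) : ℝ) := by
  rw [← prod_mul_distrib]
  refine prod_congr rfl fun j _ => ?_
  rw [_root_.sq_sub_sq, abs_mul, mul_comm, abs_of_nonneg (by positivity : (0 : ℝ) ≤ k + j)]
  push_cast; ring

theorem two_mul_prod_range_erase_abs_sq_sub_sq {k m : ℕ} (hk₁ : 1 ≤ k) (hk : k ≤ m) :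
    2 * ∏ j ∈ (range (m + 1)).erase k, |(k : ℝ) ^ 2 - j ^ 2| = (m - k)! * (m + k)! := by
  rw [prod_range_erase_abs_sq_sub_sq, prod_range_erase_abs_sub k hk, ← cast_prod,
    ← two_mul_factorial_mul_prod_range_erase_add hk₁ hk]
  push_cast; ring

theorem prod_range_erase_zero_abs_sq_sub_sq (m : ℕ) :
    ∏ j ∈ (range (m + 1)).erase 0, |((0 : ℕ) : ℝ) ^ 2 - j ^ 2| = (m ! : ℝ) ^ 2 := by
  have h := prod_range_erase_abs_sub 0 (zero_le m)
  rw [factorial_zero, cast_one, one_mul, Nat.sub_zero] at h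
  rw [← h, ← prod_pow]
  refine prod_congr rfl fun j _ => ?_
  simp

-- The factor `(m - 1) / (m + 2)` makes the bound on `∏_{1 ≤ k ≤ m} k² / |k² - 2|` inductive.
theorem add_two_mul_factorial_sq_le_prod_range_abs_sq_sub_two {m : ℕ} (hm : 2 ≤ m) :
    (m + 2) * (m ! : ℝ) ^ 2 ≤ 4 * (m - 1) * ∏ j ∈ range (m + 1), |(j : ℝ) ^ 2 - 2| := by
  induction m, hm using Nat.le_induction with
  | base => norm_num [prod_range_succ, factorial]
  | succ m hm ih =>
    have hm' : (2 : ℝ) ≤ m := by exact_mod_cast hm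
    have hlast : |((m + 1 : ℕ) : ℝ) ^ 2 - 2| = ((m : ℝ) + 1) ^ 2 - 2 := by
      push_cast; rw [abs_of_nonneg (by nlinarith)]
    rw [prod_range_succ _ (m + 1), hlast, factorial_succ]
    have hP : 0 ≤ ∏ j ∈ range (m + 1), |(j : ℝ) ^ 2 - 2| :=
      prod_nonneg fun _ _ => abs_nonneg _
    push_cast
    have hc : (0 : ℝ) ≤ ((m : ℝ) + 1) ^ 2 * (m + 3) := by positivity
    nlinarith [mul_le_mul_of_nonneg_left ih hc,
      mul_nonneg hP (by nlinarith : (0 : ℝ) ≤ (m : ℝ) ^ 2 + 2 * m + 3)]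

theorem Nat.sq_ne_two (k : ℕ) : k ^ 2 ≠ 2 := by
  intro h
  have hk : k < 2 := by nlinarith
  interval_cases k <;> simp at h

theorem abs_sq_sub_two_pos (k : ℕ) : 0 < |(k : ℝ) ^ 2 - 2| :=
  abs_pos.2 (sub_ne_zero.2 (by exact_mod_cast Nat.sq_ne_two k))

def sqExponent (m i : ℕ) : ℕ := if i = m + 1 then 2 else i ^ 2

noncomputable def sqWeight (m i : ℕ) : ℝ :=
  Lagrange.nodalWeight (range (m + 2)) (fun i => (sqExponent m i : ℝ)) i

theorem sqExponent_of_le {m i : ℕ} (hi : i ≤ m) : sqExponent m i = i ^ 2 := if_neg (by omega)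

theorem sqExponent_last (m : ℕ) : sqExponent m (m + 1) = 2 := if_pos rfl

theorem sqExponent_injOn (m : ℕ) : Set.InjOn (sqExponent m) (range (m + 2)) := by
  intro i hi j hj hij
  simp only [coe_range, Set.mem_Iio] at hi hj
  rcases eq_or_ne i (m + 1) with rfl | hi' <;> rcases eq_or_ne j (m + 1) with rfl | hj'
  · rfl
  · rw [sqExponent_last, sqExponent_of_le (by omega)] at hij
    exact absurd hij.symm (Nat.sq_ne_two j)
  · rw [sqExponent_last, sqExponent_of_le (by omega)] at hij
    exact absurd hij (Nat.sq_ne_two i)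
  · rw [sqExponent_of_le (by omega), sqExponent_of_le (by omega)] at hij
    exact Nat.pow_left_injective two_ne_zero hij

theorem prod_erase_abs_sqExponent_sub_of_le {m i : ℕ} (hi : i ≤ m) :
    ∏ j ∈ (range (m + 2)).erase i, |(sqExponent m i : ℝ) - sqExponent m j| =
      |(i : ℝ) ^ 2 - 2| * ∏ j ∈ (range (m + 1)).erase i, |(i : ℝ) ^ 2 - j ^ 2| := by
  rw [range_add_one, erase_insert_of_ne (by omega), prod_insert (by simp),
    sqExponent_of_le hi, sqExponent_last]
  push_cast
  congr 1
  refine prod_congr rfl fun j hj => ?_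
  rw [sqExponent_of_le (by simp at hj; omega)]
  push_cast; rfl

theorem prod_erase_abs_sqExponent_sub_last (m : ℕ) :
    ∏ j ∈ (range (m + 2)).erase (m + 1), |(sqExponent m (m + 1) : ℝ) - sqExponent m j| =
      ∏ j ∈ range (m + 1), |(j : ℝ) ^ 2 - 2| := by
  rw [range_add_one, erase_insert (by simp), sqExponent_last]
  refine prod_congr rfl fun j hj => ?_
  rw [sqExponent_of_le (by simp at hj; omega), abs_sub_comm]
  push_cast; rfl

theorem abs_sqWeight_last_div_le {m : ℕ} (hm : 2 ≤ m) :
    |sqWeight m (m + 1) / sqWeight m 0| ≤ 8 := by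
  have hQ : 0 < ∏ j ∈ range (m + 1), |(j : ℝ) ^ 2 - 2| :=
    prod_pos fun j _ => abs_sq_sub_two_pos j
  have hF := add_two_mul_factorial_sq_le_prod_range_abs_sq_sub_two hm
  rw [sqWeight, sqWeight, Lagrange.abs_nodalWeight_div_nodalWeight,
    prod_erase_abs_sqExponent_sub_of_le (zero_le m), prod_erase_abs_sqExponent_sub_last,
    prod_range_erase_zero_abs_sq_sub_sq, div_le_iff₀ hQ]
  norm_num
  nlinarith

theorem abs_sqWeight_div_le {m k : ℕ} (hk₁ : 1 ≤ k) (hk : k ≤ m) :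
    |sqWeight m k / sqWeight m 0| ≤ 4 / |(k : ℝ) ^ 2 - 2| := by
  have ha := abs_sq_sub_two_pos k
  have hP := two_mul_prod_range_erase_abs_sq_sub_sq hk₁ hk
  have hF : (m ! : ℝ) ^ 2 ≤ (m - k)! * (m + k)! := by
    exact_mod_cast Nat.factorial_sq_le_factorial_sub_mul_factorial_add hk
  have hPpos : 0 < ∏ j ∈ (range (m + 1)).erase k, |(k : ℝ) ^ 2 - j ^ 2| := by
    have : (0 : ℝ) < (m - k)! * (m + k)! := by positivity
    linarith
  rw [sqWeight, sqWeight, Lagrange.abs_nodalWeight_div_nodalWeight,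
    prod_erase_abs_sqExponent_sub_of_le (zero_le m), prod_erase_abs_sqExponent_sub_of_le hk,
    prod_range_erase_zero_abs_sq_sub_sq]
  norm_num
  rw [div_le_div_iff₀ (by positivity) ha]
  nlinarith

theorem sum_range_C_mul_X_pow_sqExponent (m : ℕ) (f : ℕ → ℝ) (hf : f 0 = 1) :
    ∑ i ∈ range (m + 2), C (f i) * X ^ sqExponent m i =
      1 + C (f (m + 1)) * X ^ 2 + ∑ k ∈ Icc 1 m, C (f k) * X ^ (k ^ 2) := by
  have hrange : range (m + 1) = insert 0 (Icc 1 m) := by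
    ext j; simp only [mem_range, mem_insert, mem_Icc]; omega
  rw [sum_range_succ, sqExponent_last, hrange, sum_insert (by simp),
    sqExponent_of_le (zero_le m), hf, C_1, zero_pow two_ne_zero, pow_zero, one_mul,
    add_right_comm]
  congr 1
  refine sum_congr rfl fun k hk => ?_
  rw [sqExponent_of_le (mem_Icc.1 hk).2]

theorem stmt19 (m : ℕ) (hm : 2 ≤ m) :
    ∃ d : ℝ, ∃ c : ℕ → ℝ,
      |d| ≤ 8 ∧
      (∀ k ∈ Finset.Icc 1 m, |c k| ≤ 4 / |(k : ℝ) ^ 2 - 2|) ∧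
      (X - 1) ^ (m + 1) ∣
        (1 + C d * X ^ 2 + ∑ k ∈ Finset.Icc 1 m, C (c k) * X ^ (k ^ 2) : Polynomial ℝ) := by
  have hw₀ : sqWeight m 0 ≠ 0 :=
    Lagrange.nodalWeight_ne_zero (Nat.cast_injective.comp_injOn (sqExponent_injOn m)) (by simp)
  refine ⟨sqWeight m (m + 1) / sqWeight m 0, fun k => sqWeight m k / sqWeight m 0,
    abs_sqWeight_last_div_le hm,
    fun k hk => abs_sqWeight_div_le (mem_Icc.1 hk).1 (mem_Icc.1 hk).2, ?_⟩
  have hdvd :=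
    Lagrange.X_sub_one_pow_dvd_sum_C_nodalWeight_mul_X_pow (F := ℝ) (sqExponent_injOn m)
  rw [card_range, show m + 2 - 1 = m + 1 by omega] at hdvd
  rw [← sum_range_C_mul_X_pow_sqExponent m (fun k => sqWeight m k / sqWeight m 0)
    (div_self hw₀)]
  simp_rw [div_eq_mul_inv, C_mul, mul_right_comm _ (C _), ← sum_mul]
  exact dvd_mul_of_dvd_left hdvd _
end
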